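/- arXiv:1407.6870 — 12 statements merged into one kernel-verified Lean document; each statement's English description precedes it below -/
import Mathlib

section
/- Let V and W be finite-dimensional real vector spaces, and let C ⊆ V and D ⊆ W be pointed polyhedral cones with Submodule.span ℝ C = ⊤ and Submodule.span ℝ D = ⊤. Then the hom-cone Hom(C,D) = {f : V →ₗ[ℝ] W | f '' C ⊆ D} satisfies: (i) Hom(C,D) ∩ (−Hom(C,D)) = {0}, i.e., Hom(C,D) is pointed; and (ii) the linear span of Hom(C,D) is the whole space of linear maps V →ₗ[ℝ] W; in particular Hom(C,D) is a pointed cone of dimension (dim V)·(dim W). -/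
open scoped BigOperators

/-- A polyhedral cone: the set of all nonnegative linear combinations of a
finite set of vectors. -/
def IsPolyhedralCone {V : Type*} [AddCommGroup V] [Module ℝ V] (C : Set V) : Prop :=
  ∃ s : Finset V,
    C = {x | ∃ c : V → ℝ, (∀ v, 0 ≤ c v) ∧ x = ∑ v ∈ s, c v • v}

/-!
Part (i): if `f` and `-f` both map `C` into `D`, then `f '' C ⊆ D ∩ -D = {0}`, so `f` vanishes on
`span C = ⊤`.

Part (ii): for `φ` in the dual cone `C^∨` and `d ∈ D`, the rank-one map `x ↦ φ x • d` lies in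
`Hom(C, D)`. As `D` spans `W` and rank-one maps span `V →ₗ W`, it suffices that `C^∨` spans the dual
space. A finitely generated cone is closed (Carathéodory reduces it to linearly independent
generators), so Farkas' lemma applies: a vector `z` killed by all of `C^∨` satisfies `z, -z ∈ C`,
hence `z = 0`.
-/

open Submodule LinearMap

section FinsetCone

variable {ι E F : Type*} [AddCommGroup E] [Module ℝ E] [AddCommGroup F] [Module ℝ F]

def finsetCone (s : Finset ι) (g : ι → E) : PointedCone ℝ E where
  carrier := {x | ∃ c : ι → ℝ, (∀ i ∈ s, 0 ≤ c i) ∧ ∑ i ∈ s, c i • g i = x}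
  add_mem' := by
    rintro _ _ ⟨c, hc, rfl⟩ ⟨d, hd, rfl⟩
    exact ⟨c + d, fun i hi => add_nonneg (hc i hi) (hd i hi), by
      simp only [Pi.add_apply, add_smul, Finset.sum_add_distrib]⟩
  zero_mem' := ⟨0, fun _ _ => le_rfl, by simp⟩
  smul_mem' := by
    rintro ⟨r, hr⟩ _ ⟨c, hc, rfl⟩
    exact ⟨r • c, fun i hi => mul_nonneg hr (hc i hi), by
      simp [Finset.smul_sum, smul_smul]⟩

theorem mem_finsetCone {s : Finset ι} {g : ι → E} {x : E} :
    x ∈ finsetCone s g ↔ ∃ c : ι → ℝ, (∀ i ∈ s, 0 ≤ c i) ∧ ∑ i ∈ s, c i • g i = x :=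
  Iff.rfl

theorem IsPolyhedralCone.exists_eq_finsetCone {C : Set E} (hC : IsPolyhedralCone C) :
    ∃ s : Finset E, C = finsetCone s id := by
  obtain ⟨s, rfl⟩ := hC
  refine ⟨s, Set.ext fun x => ⟨?_, ?_⟩⟩
  · rintro ⟨c, hc, rfl⟩
    exact ⟨c, fun v _ => hc v, rfl⟩
  · rintro ⟨c, hc, rfl⟩
    refine ⟨fun v => max (c v) 0, fun v => le_max_right _ _, Finset.sum_congr rfl fun v hv => ?_⟩
    simp [max_eq_left (hc v hv)]

theorem finsetCone_mono {s t : Finset ι} (h : s ⊆ t) (g : ι → E) :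
    finsetCone s g ≤ finsetCone t g := by
  classical
  rintro _ ⟨c, hc, rfl⟩
  refine ⟨fun i => if i ∈ s then c i else 0, fun i _ => ?_, ?_⟩
  · dsimp only
    split_ifs with hi
    exacts [hc i hi, le_rfl]
  · rw [← Finset.sum_subset h fun i _ hi => by simp [hi]]
    exact Finset.sum_congr rfl fun i hi => by simp [hi]

theorem map_finsetCone (s : Finset ι) (g : ι → E) (f : E →ₗ[ℝ] F) :
    (finsetCone s g).map f = finsetCone s (f ∘ g) := by
  ext y
  simp only [PointedCone.mem_map, mem_finsetCone, Function.comp_apply]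
  constructor
  · rintro ⟨_, ⟨c, hc, rfl⟩, rfl⟩
    exact ⟨c, hc, by simp [map_sum]⟩
  · rintro ⟨c, hc, rfl⟩
    exact ⟨_, ⟨c, hc, rfl⟩, by simp [map_sum]⟩

theorem exists_mem_finsetCone_erase [DecidableEq ι] {s : Finset ι} {g : ι → E} {x : E}
    (hs : ¬LinearIndepOn ℝ g s) (hx : x ∈ finsetCone s g) :
    ∃ j ∈ s, x ∈ finsetCone (s.erase j) g := by
  obtain ⟨c, hc, rfl⟩ := hx
  obtain ⟨d, hd, i, hi, hdi⟩ : ∃ d : ι → ℝ, ∑ i ∈ s, d i • g i = 0 ∧ ∃ i ∈ s, 0 < d i := by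
    obtain ⟨d, hd, i, hi, hdi⟩ := not_linearIndepOn_finset_iff.1 hs
    rcases hdi.lt_or_gt with hneg | hpos
    · exact ⟨-d, by simp [neg_smul, hd], i, hi, neg_pos.2 hneg⟩
    · exact ⟨d, hd, i, hi, hpos⟩
  -- Move along the relation `d` until the first coefficient reaches zero.
  obtain ⟨j, hj, hmin⟩ := (s.filter (0 < d ·)).exists_min_image (fun i => c i / d i)
    ⟨i, Finset.mem_filter.2 ⟨hi, hdi⟩⟩
  rw [Finset.mem_filter] at hj
  set r := c j / d j
  have hnonneg : ∀ i ∈ s, 0 ≤ c i - r * d i := by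
    intro i hi
    rcases le_or_gt (d i) 0 with hdi | hdi
    · nlinarith [hc i hi, div_nonneg (hc j hj.1) hj.2.le]
    · have := (le_div_iff₀ hdi).1 (hmin i (Finset.mem_filter.2 ⟨hi, hdi⟩))
      linarith
  have hsum : ∑ i ∈ s, (c i - r * d i) • g i = ∑ i ∈ s, c i • g i := by
    simp only [sub_smul, Finset.sum_sub_distrib, mul_smul, ← Finset.smul_sum, hd, smul_zero,
      sub_zero]
  refine ⟨j, hj.1, fun i => c i - r * d i, fun i hi => hnonneg i (Finset.mem_of_mem_erase hi), ?_⟩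
  rw [Finset.sum_erase _ (by simp [r, div_mul_cancel₀ _ hj.2.ne']), hsum]

theorem exists_linearIndepOn_mem_finsetCone {s : Finset ι} {g : ι → E} {x : E}
    (hx : x ∈ finsetCone s g) : ∃ t ⊆ s, LinearIndepOn ℝ g t ∧ x ∈ finsetCone t g := by
  classical
  induction s using Finset.strongInduction with
  | H s ih =>
    by_cases hs : LinearIndepOn ℝ g s
    · exact ⟨s, subset_rfl, hs, hx⟩
    obtain ⟨j, hj, hxj⟩ := exists_mem_finsetCone_erase hs hx
    obtain ⟨t, hts, ht, hxt⟩ := ih _ (Finset.erase_ssubset hj) hxj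
    exact ⟨t, hts.trans (s.erase_subset j), ht, hxt⟩

variable [TopologicalSpace E] [IsTopologicalAddGroup E] [ContinuousSMul ℝ E] [T2Space E]

theorem isClosed_finsetCone_of_linearIndepOn {t : Finset ι} {g : ι → E}
    (ht : LinearIndepOn ℝ g t) : IsClosed (finsetCone t g : Set E) := by
  classical
  let L := Fintype.linearCombination ℝ (fun i : t => g i)
  have hL : ker L = ⊥ := ker_eq_bot.2 ht.fintypeLinearCombination_injective
  have hcone : (finsetCone t g : Set E) = L '' Set.Ici 0 := by
    ext x
    simp only [SetLike.mem_coe, mem_finsetCone, Set.mem_image, Set.mem_Ici, L,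
      Fintype.linearCombination_apply]
    constructor
    · rintro ⟨c, hc, rfl⟩
      exact ⟨fun i => c i, fun i => hc i i.2, Finset.sum_coe_sort t fun i => c i • g i⟩
    · rintro ⟨c, hc, rfl⟩
      refine ⟨fun i => if h : i ∈ t then c ⟨i, h⟩ else 0,
        fun i hi => by simpa [hi] using hc ⟨i, hi⟩, ?_⟩
      rw [← Finset.sum_coe_sort t]
      simp
  rw [hcone]
  exact (isClosedEmbedding_of_injective hL).isClosedMap _ isClosed_Ici

theorem isClosed_finsetCone (s : Finset ι) (g : ι → E) : IsClosed (finsetCone s g : Set E) := by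
  classical
  have hunion : (finsetCone s g : Set E) =
      ⋃ t ∈ s.powerset.filter (fun t : Finset ι => LinearIndepOn ℝ g t),
        (finsetCone t g : Set E) := by
    ext x
    simp only [Set.mem_iUnion, Finset.mem_filter, Finset.mem_powerset, SetLike.mem_coe,
      exists_prop]
    constructor
    · intro hx
      obtain ⟨t, hts, ht, hxt⟩ := exists_linearIndepOn_mem_finsetCone hx
      exact ⟨t, ⟨hts, ht⟩, hxt⟩
    · rintro ⟨t, ⟨hts, -⟩, hxt⟩
      exact finsetCone_mono hts g hxt
  rw [hunion]
  exact isClosed_biUnion_finset fun t ht => isClosed_finsetCone_of_linearIndepOn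
    (Finset.mem_filter.1 ht).2

end FinsetCone

section Farkas

variable {ι E : Type*} [AddCommGroup E] [Module ℝ E] [FiniteDimensional ℝ E]

theorem exists_dual_nonneg_of_notMem_finsetCone {s : Finset ι} {g : ι → E} {x : E}
    (hx : x ∉ finsetCone s g) :
    ∃ φ : Module.Dual ℝ E, (∀ y ∈ finsetCone s g, 0 ≤ φ y) ∧ φ x < 0 := by
  -- `E` carries no topology: transport to `Fin n → ℝ`, where the cone is closed and
  -- Hahn–Banach separation applies.
  let e := (Module.finBasis ℝ E).equivFun
  let K : ProperCone ℝ (Fin (Module.finrank ℝ E) → ℝ) :=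
    ⟨(finsetCone s g).map (e : E →ₗ[ℝ] _), by rw [map_finsetCone]; exact isClosed_finsetCone s _⟩
  have hex : e x ∉ K := by
    rintro ⟨y, hy, hyx⟩
    exact hx (e.injective hyx ▸ hy)
  obtain ⟨f, hf, hfx⟩ := K.hyperplane_separation_point hex
  exact ⟨f.toLinearMap ∘ₗ e.toLinearMap, fun y hy => hf _ ⟨y, hy, rfl⟩, hfx⟩

theorem span_dual_finsetCone_eq_top {s : Finset ι} {g : ι → E}
    (hpointed : (finsetCone s g : Set E) ∩ -(finsetCone s g : Set E) = {0}) :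
    span ℝ {φ : Module.Dual ℝ E | ∀ x ∈ finsetCone s g, 0 ≤ φ x} = ⊤ := by
  refine span_eq_top_of_ne_zero fun z hz => ?_
  have : z ∉ finsetCone s g ∨ -z ∉ finsetCone s g := by
    by_contra! h
    have hz' : z ∈ (finsetCone s g : Set E) ∩ -(finsetCone s g : Set E) := ⟨h.1, h.2⟩
    exact hz (by simpa [hpointed] using hz')
  rcases this with hz | hz
  · obtain ⟨φ, hφ, hφz⟩ := exists_dual_nonneg_of_notMem_finsetCone hz
    exact ⟨φ, hφ, hφz.ne⟩
  · obtain ⟨φ, hφ, hφz⟩ := exists_dual_nonneg_of_notMem_finsetCone hz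
    exact ⟨φ, hφ, by simpa using hφz.ne⟩

end Farkas

section HomCone

variable (R : Type*) {V W : Type*} [AddCommGroup V] [AddCommGroup W]

def homCone [Semiring R] [Module R V] [Module R W] (C : Set V) (D : Set W) :
    Set (V →ₗ[R] W) :=
  {f | f '' C ⊆ D}

variable {R}

theorem homCone_inter_neg_eq_zero [Ring R] [Module R V] [Module R W] {C : Set V} {D : Set W}
    (hD : D ∩ -D = {0}) (hC : span R C = ⊤) :
    homCone R C D ∩ -homCone R C D = {0} := by
  have hD0 : (0 : W) ∈ D := (hD.symm.subset (Set.mem_singleton 0)).1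
  ext f
  constructor
  · rintro ⟨hf, hnf⟩
    refine ext_on hC fun x hx => ?_
    have : f x ∈ D ∩ -D := ⟨hf ⟨x, hx, rfl⟩, by simpa using hnf ⟨x, hx, rfl⟩⟩
    rwa [hD] at this
  · rintro rfl
    refine ⟨?_, ?_⟩ <;> rintro _ ⟨x, -, rfl⟩ <;> simpa using hD0

theorem map₂_smulRightₗ_top [CommRing R] [Module R V] [Module R W] [Module.Free R V]
    [Module.Finite R V] :
    map₂ (smulRightₗ : Module.Dual R V →ₗ[R] W →ₗ[R] V →ₗ[R] W) ⊤ ⊤ = ⊤ := by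
  refine eq_top_iff.2 fun f _ => ?_
  let b := Module.Free.chooseBasis R V
  have hf : f = ∑ i, smulRightₗ (b.coord i) (f (b i)) := b.ext fun j => by
    simp [Finsupp.single_apply]
  rw [hf]
  exact sum_mem fun i _ => apply_mem_map₂ _ mem_top mem_top

theorem span_homCone_eq_top [CommRing R] [PartialOrder R] [IsOrderedRing R] [Module R V]
    [Module R W] [Module.Free R V] [Module.Finite R V] {C : Set V} (D : PointedCone R W)
    (hD : span R (D : Set W) = ⊤) (hC : span R {φ : Module.Dual R V | ∀ x ∈ C, 0 ≤ φ x} = ⊤) :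
    span R (homCone R C (D : Set W)) = ⊤ := by
  have hsub : Set.image2 (fun φ w => smulRightₗ φ w) {φ : Module.Dual R V | ∀ x ∈ C, 0 ≤ φ x}
      (D : Set W) ⊆ homCone R C (D : Set W) := by
    rintro _ ⟨φ, hφ, w, hw, rfl⟩ _ ⟨x, hx, rfl⟩
    exact D.smul_mem (hφ x hx) hw
  rw [eq_top_iff, ← map₂_smulRightₗ_top, ← hC, ← hD, map₂_span_span]
  exact span_mono hsub

end HomCone

theorem stmt_1 {V W : Type*}
    [AddCommGroup V] [Module ℝ V] [FiniteDimensional ℝ V]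
    [AddCommGroup W] [Module ℝ W] [FiniteDimensional ℝ W]
    (C : Set V) (D : Set W)
    (hC : IsPolyhedralCone C) (hD : IsPolyhedralCone D)
    (hCpointed : C ∩ (-C) = {0}) (hDpointed : D ∩ (-D) = {0})
    (hCspan : Submodule.span ℝ C = ⊤) (hDspan : Submodule.span ℝ D = ⊤) :
    {f : V →ₗ[ℝ] W | f '' C ⊆ D} ∩ (-{f : V →ₗ[ℝ] W | f '' C ⊆ D}) = {0} ∧
    Submodule.span ℝ {f : V →ₗ[ℝ] W | f '' C ⊆ D} = ⊤ ∧
    Module.finrank ℝ (V →ₗ[ℝ] W) = Module.finrank ℝ V * Module.finrank ℝ W := by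
  obtain ⟨s, rfl⟩ := hC.exists_eq_finsetCone
  obtain ⟨t, rfl⟩ := hD.exists_eq_finsetCone
  exact ⟨homCone_inter_neg_eq_zero hDpointed hCspan,
    span_homCone_eq_top _ hDspan (span_dual_finsetCone_eq_top hCpointed),
    Module.finrank_linearMap ℝ ℝ V W⟩
end

section
/- Let V and W be finite-dimensional real vector spaces, and let C ⊆ V and D ⊆ W be pointed polyhedral cones with Submodule.span ℝ C = ⊤ and Submodule.span ℝ D = ⊤. Then the tensor product cone C ⊗ D ⊆ V ⊗[ℝ] W satisfies: (i) (C ⊗ D) ∩ (−(C ⊗ D)) = {0}, i.e., C ⊗ D is a pointed cone; and (ii) the linear span of C ⊗ D is all of V ⊗[ℝ] W. -/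
/-!
A pointed polyhedral cone `C` carries a linear functional `f` that is positive on `C \ {0}`:
Hahn–Banach separates `0` from the convex hull of the nonzero generators, which avoids `0`
precisely because `C` is pointed. For such `f` on `C` and `g` on `D`, the functional
`x ⊗ y ↦ f x * g y` is positive on every nonzero `x ⊗ y` with `x ∈ C`, `y ∈ D`, hence on every
nonzero element of `C ⊗ D`, so `C ⊗ D` is pointed. Its span is that of the elementary tensors,
which is everything since `C` and `D` span.
-/

open scoped BigOperators TensorProduct

/-- The tensor product cone of two cones: all nonnegative linear combinations of
elementary tensors `x ⊗ y` with `x ∈ C`, `y ∈ D`. -/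
def tensorCone {V W : Type*} [AddCommGroup V] [Module ℝ V] [AddCommGroup W] [Module ℝ W]
    (C : Set V) (D : Set W) : Set (V ⊗[ℝ] W) :=
  {z | ∃ (n : ℕ) (c : Fin n → ℝ) (x : Fin n → V) (y : Fin n → W),
    (∀ i, 0 ≤ c i) ∧ (∀ i, x i ∈ C) ∧ (∀ i, y i ∈ D) ∧
      z = ∑ i, c i • (x i ⊗ₜ[ℝ] y i)}

open Set TensorProduct

theorem Set.Finite.exists_pos_of_zero_notMem_convexHull {V : Type*} [AddCommGroup V]
    [Module ℝ V] {s : Set V} (hs : s.Finite) (h0 : (0 : V) ∉ convexHull ℝ s) :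
    ∃ f : V →ₗ[ℝ] ℝ, ∀ v ∈ s, 0 < f v := by
  -- Hahn–Banach needs a topology: transport `s` to coordinates on its (finite-dimensional) span.
  set U := Submodule.span ℝ s
  have : FiniteDimensional ℝ U := FiniteDimensional.span_of_finite ℝ hs
  obtain ⟨ψ, hψ⟩ := LinearMap.exists_extend
    ((Module.finBasis ℝ U).equivFun : U →ₗ[ℝ] Fin (Module.finrank ℝ U) → ℝ)
  have hψ_inj : ∀ x ∈ U, ψ x = 0 → x = 0 := fun x hx hx0 => by
    have h := LinearMap.congr_fun hψ ⟨x, hx⟩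
    simpa [hx0, eq_comm (a := (0 : Fin _ → ℝ))] using h
  have hψ0 : 0 ∉ convexHull ℝ (ψ '' s) := by
    rw [← LinearMap.image_convexHull]
    rintro ⟨x, hx, hx0⟩
    exact h0 (hψ_inj x (convexHull_min Submodule.subset_span U.convex hx) hx0 ▸ hx)
  obtain ⟨g, u, hgu, hg⟩ := geometric_hahn_banach_point_closed (convex_convexHull ℝ _)
    ((hs.image ψ).isCompact_convexHull (𝕜 := ℝ)).isClosed hψ0
  refine ⟨(g : (Fin _ → ℝ) →ₗ[ℝ] ℝ) ∘ₗ ψ, fun v hv => ?_⟩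
  rw [map_zero] at hgu
  exact hgu.trans (hg _ (subset_convexHull ℝ _ (mem_image_of_mem ψ hv)))

namespace LinearMap

variable {R E : Type*} [Semiring R] [LinearOrder R] [IsStrictOrderedRing R]
  [AddCommMonoid E] [Module R E]

def strictPosCone (f : E →ₗ[R] R) : PointedCone R E where
  carrier := {x | x = 0 ∨ 0 < f x}
  add_mem' := by
    rintro x y (rfl | hx) (rfl | hy)
    · simp
    · simp [hy]
    · simp [hx]
    · exact Or.inr (by rw [map_add]; exact add_pos hx hy)
  zero_mem' := Or.inl rfl
  smul_mem' := by
    rintro ⟨c, hc⟩ x (rfl | hx)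
    · simp
    rcases hc.eq_or_lt with rfl | hc
    · simp
    · exact Or.inr (by simpa using mul_pos hc hx)

end LinearMap

theorem LinearMap.salient_strictPosCone {R E : Type*} [Ring R] [LinearOrder R]
    [IsStrictOrderedRing R] [AddCommGroup E] [Module R E] (f : E →ₗ[R] R) :
    (f.strictPosCone : ConvexCone R E).Salient := by
  intro x hx hx0 hnx
  rcases hx with rfl | hx
  · exact hx0 rfl
  rcases hnx with hnx | hnx
  · exact hx0 (neg_eq_zero.1 hnx)
  · rw [map_neg, neg_pos] at hnx
    exact lt_asymm hx hnx

theorem PointedCone.zero_notMem_convexHull_of_salient {𝕜 E : Type*} [Field 𝕜] [LinearOrder 𝕜]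
    [IsStrictOrderedRing 𝕜] [AddCommGroup E] [Module 𝕜 E] {K : PointedCone 𝕜 E}
    (hK : (K : ConvexCone 𝕜 E).Salient) {t : Set E} (htK : t ⊆ K) (ht0 : (0 : E) ∉ t) :
    (0 : E) ∉ convexHull 𝕜 t := by
  classical
  intro h0
  obtain ⟨ι, _, z, w, hzt, -, hw, hw1, hsum⟩ := eq_pos_convex_span_of_mem_convexHull h0
  obtain ⟨i⟩ : Nonempty ι := by
    by_contra hι
    simp [not_nonempty_iff.1 hι] at hw1
  have hzK : ∀ j, z j ∈ K := fun j => htK (hzt (mem_range_self j))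
  have hzi : w i • z i ≠ 0 :=
    smul_ne_zero (hw i).ne' fun h => ht0 (h ▸ hzt (mem_range_self i))
  refine hK _ (K.smul_mem (hw i).le (hzK i)) hzi ?_
  rw [← Finset.add_sum_erase _ _ (Finset.mem_univ i)] at hsum
  rw [neg_eq_of_add_eq_zero_right hsum]
  exact K.sum_mem fun j _ => K.smul_mem (hw j).le (hzK j)

theorem IsPolyhedralCone.exists_finset_eq_hull {V : Type*} [AddCommGroup V] [Module ℝ V]
    {C : Set V} (hC : IsPolyhedralCone C) :
    ∃ s : Finset V, C = PointedCone.hull ℝ (s : Set V) := by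
  obtain ⟨s, rfl⟩ := hC
  refine ⟨s, ext fun x => ⟨?_, fun hx => ?_⟩⟩
  · rintro ⟨c, hc, rfl⟩
    exact Submodule.sum_mem _ fun v hv => PointedCone.smul_mem _ (hc v) (Submodule.subset_span hv)
  · obtain ⟨c, -, rfl⟩ := Submodule.mem_span_finset.1 hx
    exact ⟨fun v => c v, fun v => (c v).2, rfl⟩

theorem IsPolyhedralCone.exists_subset_strictPosCone {V : Type*} [AddCommGroup V] [Module ℝ V]
    {C : Set V} (hC : IsPolyhedralCone C) (hpointed : C ∩ -C = {0}) :
    ∃ f : V →ₗ[ℝ] ℝ, C ⊆ f.strictPosCone := by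
  obtain ⟨s, rfl⟩ := hC.exists_finset_eq_hull
  have hsalient := (PointedCone.salient_iff_inter_neg_eq_singleton _).2 hpointed
  obtain ⟨f, hf⟩ := (s.finite_toSet.sdiff (t := {0})).exists_pos_of_zero_notMem_convexHull
    (PointedCone.zero_notMem_convexHull_of_salient hsalient
      (sdiff_subset.trans PointedCone.subset_hull) fun h => h.2 rfl)
  refine ⟨f, Submodule.span_le.2 fun v hv => ?_⟩
  rcases eq_or_ne v 0 with rfl | hv0
  · exact Or.inl rfl
  · exact Or.inr (hf v ⟨hv, hv0⟩)

theorem tensorCone_eq_hull {V W : Type*} [AddCommGroup V] [Module ℝ V] [AddCommGroup W]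
    [Module ℝ W] (C : Set V) (D : Set W) :
    tensorCone C D = PointedCone.hull ℝ (image2 (· ⊗ₜ[ℝ] ·) C D) := by
  ext z
  refine ⟨?_, fun hz => ?_⟩
  · rintro ⟨n, c, x, y, hc, hx, hy, rfl⟩
    exact Submodule.sum_mem _ fun i _ =>
      PointedCone.smul_mem _ (hc i) (PointedCone.subset_hull (mem_image2_of_mem (hx i) (hy i)))
  · obtain ⟨n, c, t, rfl⟩ := Submodule.mem_span_set'.1 hz
    choose x hx y hy hxy using fun i => (t i).2
    exact ⟨n, fun i => c i, x, y, fun i => (c i).2, hx, hy, by simp_rw [hxy]; rfl⟩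

theorem hull_image2_tmul_le_strictPosCone {R V W : Type*} [CommRing R] [LinearOrder R]
    [IsStrictOrderedRing R] [AddCommGroup V] [Module R V] [AddCommGroup W] [Module R W]
    {C : Set V} {D : Set W} {f : V →ₗ[R] R} {g : W →ₗ[R] R}
    (hf : C ⊆ f.strictPosCone) (hg : D ⊆ g.strictPosCone) :
    PointedCone.hull R (image2 (· ⊗ₜ[R] ·) C D) ≤ (dualDistrib R V W (f ⊗ₜ g)).strictPosCone := by
  refine Submodule.span_le.2 ?_
  rintro _ ⟨x, hx, y, hy, rfl⟩
  rcases hf hx with rfl | hfx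
  · exact Or.inl (zero_tmul _ _)
  rcases hg hy with rfl | hgy
  · exact Or.inl (tmul_zero _ _)
  exact Or.inr (by simpa [dualDistrib_apply] using mul_pos hfx hgy)

theorem span_image2_tmul_eq_top {R V W : Type*} [CommRing R] [AddCommGroup V] [Module R V]
    [AddCommGroup W] [Module R W] {C : Set V} {D : Set W}
    (hC : Submodule.span R C = ⊤) (hD : Submodule.span R D = ⊤) :
    Submodule.span R (image2 (· ⊗ₜ[R] ·) C D) = ⊤ := by
  have := Submodule.map₂_span_span R (TensorProduct.mk R V W) C D
  rw [hC, hD, map₂_mk_top_top_eq_top] at this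
  exact this.symm

theorem stmt_2_general {V W : Type*}
    [AddCommGroup V] [Module ℝ V]
    [AddCommGroup W] [Module ℝ W]
    (C : Set V) (D : Set W)
    (hC : IsPolyhedralCone C) (hD : IsPolyhedralCone D)
    (hCpointed : C ∩ (-C) = {0}) (hDpointed : D ∩ (-D) = {0})
    (hCspan : Submodule.span ℝ C = ⊤) (hDspan : Submodule.span ℝ D = ⊤) :
    tensorCone C D ∩ (-(tensorCone C D)) = {0} ∧
    Submodule.span ℝ (tensorCone C D) = ⊤ := by
  obtain ⟨f, hf⟩ := hC.exists_subset_strictPosCone hCpointed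
  obtain ⟨g, hg⟩ := hD.exists_subset_strictPosCone hDpointed
  rw [tensorCone_eq_hull]
  refine ⟨(PointedCone.salient_iff_inter_neg_eq_singleton _).1 ?_, ?_⟩
  · exact (LinearMap.salient_strictPosCone _).anti (hull_image2_tmul_le_strictPosCone hf hg)
  · rw [Submodule.span_span_of_tower, span_image2_tmul_eq_top hCspan hDspan]

theorem stmt_2 {V W : Type*}
    [AddCommGroup V] [Module ℝ V] [FiniteDimensional ℝ V]
    [AddCommGroup W] [Module ℝ W] [FiniteDimensional ℝ W]
    (C : Set V) (D : Set W)
    (hC : IsPolyhedralCone C) (hD : IsPolyhedralCone D)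
    (hCpointed : C ∩ (-C) = {0}) (hDpointed : D ∩ (-D) = {0})
    (hCspan : Submodule.span ℝ C = ⊤) (hDspan : Submodule.span ℝ D = ⊤) :
    tensorCone C D ∩ (-(tensorCone C D)) = {0} ∧
    Submodule.span ℝ (tensorCone C D) = ⊤ :=
  stmt_2_general C D hC hD hCpointed hDpointed hCspan hDspan
end

section
/- Let V and W be finite-dimensional real vector spaces, let P ⊆ V be a polytope (the convex hull of a finite set) with affineSpan ℝ P = ⊤, and let Q ⊆ W be a nonempty polytope. Then the hom-polytope Hom(P,Q) = {f : V →ᵃ[ℝ] W | f '' P ⊆ Q} is a polytope in the real vector space of affine maps from V to W: there exists a finite set F of affine maps V →ᵃ[ℝ] W such that Hom(P,Q) = convexHull ℝ F. -/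
/-- A polytope: the convex hull of a finite set of points. -/
def IsPolytope {V : Type*} [AddCommGroup V] [Module ℝ V] (P : Set V) : Prop :=
  ∃ F : Finset V, P = convexHull ℝ (F : Set V)

/-!
Evaluation at the finitely many points `S` with `P = conv S` is linear, injective because `S`
affinely spans `V`, and `Hom(P, Q)` is the preimage of the polytope `Q^S` under it. The
preimage of a polytope under an injective linear map is a polytope, because the range is cut
out by finitely many hyperplanes and a hyperplane slice `conv F ∩ {ℓ = c}` is the convex hull
of the points where the segments `[a, b]` with `a, b ∈ F`, `ℓ a ≤ c ≤ ℓ b` cross the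
hyperplane: a point `∑ w v • v` of the slice is rewritten as a convex combination of these
crossings by pairing every vertex below the hyperplane with every vertex above it.
-/

theorem sum_product_pair_smul_eq {ι M : Type*} [AddCommGroup M] [Module ℝ M]
    (A B : Finset ι) (w α β : ι → ℝ) (f : ι → M) {D : ℝ} (hD : D ≠ 0)
    (hA : ∑ a ∈ A, w a * α a = D) (hB : ∑ b ∈ B, w b * β b = D) :
    ∑ p ∈ A ×ˢ B, (w p.1 * w p.2 / D) • (β p.2 • f p.1 + α p.1 • f p.2) =
      ∑ a ∈ A, w a • f a + ∑ b ∈ B, w b • f b := by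
  have hB' : ∀ a, ∑ b ∈ B, w a * w b / D * β b = w a := fun a => calc
    _ = w a / D * ∑ b ∈ B, w b * β b := by
      rw [Finset.mul_sum]; exact Finset.sum_congr rfl fun b _ => by ring
    _ = w a := by rw [hB, div_mul_cancel₀ _ hD]
  have hA' : ∀ b, ∑ a ∈ A, w a * w b / D * α a = w b := fun b => calc
    _ = w b / D * ∑ a ∈ A, w a * α a := by
      rw [Finset.mul_sum]; exact Finset.sum_congr rfl fun a _ => by ring
    _ = w b := by rw [hA, div_mul_cancel₀ _ hD]
  simp_rw [Finset.sum_product, smul_add, smul_smul, Finset.sum_add_distrib, ← Finset.sum_smul,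
    hB']
  rw [Finset.sum_comm]
  simp_rw [← Finset.sum_smul, hA']

theorem sum_smul_mem_convexHull_of_weight_ne_zero {E : Type*} [AddCommGroup E] [Module ℝ E]
    {s : Finset E} {t : Set E} {w : E → ℝ} (hw0 : ∀ v ∈ s, 0 ≤ w v) (hw1 : ∑ v ∈ s, w v = 1)
    (ht : ∀ v ∈ s, w v ≠ 0 → v ∈ t) : ∑ v ∈ s, w v • v ∈ convexHull ℝ t := by
  classical
  rw [← Finset.sum_filter_of_ne fun v _ h => left_ne_zero_of_smul h]
  rw [← Finset.sum_filter_of_ne fun v _ h => h] at hw1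
  exact (convex_convexHull ℝ t).sum_mem (fun v hv => hw0 v (Finset.mem_filter.1 hv).1) hw1
    fun v hv => subset_convexHull ℝ t <|
      ht v (Finset.mem_filter.1 hv).1 (Finset.mem_filter.1 hv).2

section Hyperplane

variable {V : Type*} [AddCommGroup V] [Module ℝ V] (ℓ : V →ₗ[ℝ] ℝ) (c : ℝ)

/-- When `ℓ a = ℓ b` the parameter is `0 / 0 = 0`, so a segment lying in the hyperplane
contributes its endpoint `a`; in particular every vertex on the hyperplane is a crossing. -/
noncomputable def hyperplaneCrossing (a b : V) : V :=
  AffineMap.lineMap a b ((c - ℓ a) / (ℓ b - ℓ a))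

theorem hyperplaneCrossing_self (a : V) : hyperplaneCrossing ℓ c a a = a :=
  AffineMap.lineMap_same_apply _ _

variable {ℓ c}

theorem apply_hyperplaneCrossing {a b : V} (ha : ℓ a ≤ c) (hb : c ≤ ℓ b) :
    ℓ (hyperplaneCrossing ℓ c a b) = c := by
  rw [hyperplaneCrossing, AffineMap.lineMap_apply_module, map_add, map_smul, map_smul,
    smul_eq_mul, smul_eq_mul]
  rcases eq_or_ne (ℓ a) (ℓ b) with h | h
  · simp [← h]; linarith
  · field_simp [sub_ne_zero.2 h.symm]; ring

theorem hyperplaneCrossing_mem_segment {a b : V} (ha : ℓ a ≤ c) (hb : c ≤ ℓ b) :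
    hyperplaneCrossing ℓ c a b ∈ segment ℝ a b :=
  lineMap_mem_segment ℝ a b ⟨div_nonneg (sub_nonneg.2 ha) (sub_nonneg.2 (ha.trans hb)),
    div_le_one_of_le₀ (by linarith) (sub_nonneg.2 (ha.trans hb))⟩

theorem sub_smul_hyperplaneCrossing {a b : V} (h : ℓ a ≠ ℓ b) :
    (ℓ b - ℓ a) • hyperplaneCrossing ℓ c a b = (ℓ b - c) • a + (c - ℓ a) • b := by
  have : ℓ b - ℓ a ≠ 0 := sub_ne_zero.2 h.symm
  rw [hyperplaneCrossing, AffineMap.lineMap_apply_module, smul_add, smul_smul, smul_smul,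
    mul_div_cancel₀ _ this, mul_sub, mul_one, mul_div_cancel₀ _ this]
  congr 2; ring

variable (ℓ c) in
open Classical in
noncomputable def hyperplaneCrossings (F : Finset V) : Finset V :=
  ((F ×ˢ F).filter fun p => ℓ p.1 ≤ c ∧ c ≤ ℓ p.2).image
    fun p => hyperplaneCrossing ℓ c p.1 p.2

theorem hyperplaneCrossing_mem_hyperplaneCrossings {F : Finset V} {a b : V} (ha : a ∈ F)
    (hb : b ∈ F) (hac : ℓ a ≤ c) (hbc : c ≤ ℓ b) :
    hyperplaneCrossing ℓ c a b ∈ hyperplaneCrossings ℓ c F := by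
  classical
  exact Finset.mem_image.2
    ⟨(a, b), Finset.mem_filter.2 ⟨Finset.mem_product.2 ⟨ha, hb⟩, hac, hbc⟩, rfl⟩

theorem convexHull_hyperplaneCrossings_subset (F : Finset V) :
    convexHull ℝ (hyperplaneCrossings ℓ c F : Set V) ⊆
      convexHull ℝ (F : Set V) ∩ {x | ℓ x = c} := by
  classical
  refine convexHull_min ?_ ((convex_convexHull ℝ _).inter (convex_hyperplane ℓ.isLinear c))
  intro z hz
  obtain ⟨⟨a, b⟩, hab, rfl⟩ := Finset.mem_image.1 hz
  obtain ⟨hab, hac, hbc⟩ := Finset.mem_filter.1 hab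
  obtain ⟨ha, hb⟩ := Finset.mem_product.1 hab
  exact ⟨(convex_convexHull ℝ _).segment_subset (subset_convexHull ℝ _ ha)
    (subset_convexHull ℝ _ hb) (hyperplaneCrossing_mem_segment hac hbc),
    apply_hyperplaneCrossing hac hbc⟩

theorem sum_smul_mem_convexHull_hyperplaneCrossings_of_pos {F : Finset V} {w : V → ℝ}
    (hw0 : ∀ v ∈ F, 0 ≤ w v) (hw1 : ∑ v ∈ F, w v = 1)
    (hD : 0 < ∑ b ∈ F.filter (¬ ℓ · < c), w b * (ℓ b - c))
    (hbal : ∑ a ∈ F.filter (ℓ · < c), w a * (c - ℓ a) =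
      ∑ b ∈ F.filter (¬ ℓ · < c), w b * (ℓ b - c)) :
    ∑ v ∈ F, w v • v ∈ convexHull ℝ (hyperplaneCrossings ℓ c F : Set V) := by
  set Lo := F.filter (ℓ · < c)
  set Hi := F.filter (¬ ℓ · < c)
  set D := ∑ b ∈ Hi, w b * (ℓ b - c)
  have hlt : ∀ p ∈ Lo ×ˢ Hi, ℓ p.1 < ℓ p.2 := fun p hp => by
    obtain ⟨ha, hb⟩ := Finset.mem_product.1 hp
    exact (Finset.mem_filter.1 ha).2.trans_le (not_lt.1 (Finset.mem_filter.1 hb).2)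
  have hpair := sum_product_pair_smul_eq Lo Hi w (fun a => c - ℓ a) (fun b => ℓ b - c) id
    hD.ne' hbal rfl
  have hpair₁ := sum_product_pair_smul_eq Lo Hi w (fun a => c - ℓ a) (fun b => ℓ b - c)
    (fun _ => (1 : ℝ)) hD.ne' hbal rfl
  simp only [smul_eq_mul, mul_one, id] at hpair hpair₁
  rw [Finset.sum_filter_add_sum_filter_not F (ℓ · < c)] at hpair hpair₁
  have hx : ∑ v ∈ F, w v • v = ∑ p ∈ Lo ×ˢ Hi,
      (w p.1 * w p.2 * (ℓ p.2 - ℓ p.1) / D) • hyperplaneCrossing ℓ c p.1 p.2 := by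
    rw [← hpair]
    refine Finset.sum_congr rfl fun p hp => ?_
    rw [← sub_smul_hyperplaneCrossing (hlt p hp).ne, smul_smul]
    congr 1; ring
  have hw : ∑ p ∈ Lo ×ˢ Hi, w p.1 * w p.2 * (ℓ p.2 - ℓ p.1) / D = 1 := by
    rw [← hw1, ← hpair₁]
    exact Finset.sum_congr rfl fun p _ => by ring
  rw [hx]
  refine (convex_convexHull ℝ _).sum_mem (fun p hp => ?_) hw
    fun p hp => subset_convexHull ℝ _ ?_
  · obtain ⟨ha, hb⟩ := Finset.mem_product.1 hp
    exact div_nonneg (mul_nonneg (mul_nonneg (hw0 _ (Finset.mem_filter.1 ha).1)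
      (hw0 _ (Finset.mem_filter.1 hb).1)) (sub_nonneg.2 (hlt p hp).le)) hD.le
  · obtain ⟨ha, hb⟩ := Finset.mem_product.1 hp
    obtain ⟨haF, hac⟩ := Finset.mem_filter.1 ha
    obtain ⟨hbF, hbc⟩ := Finset.mem_filter.1 hb
    exact hyperplaneCrossing_mem_hyperplaneCrossings haF hbF hac.le (not_lt.1 hbc)

theorem sum_smul_mem_convexHull_hyperplaneCrossings {F : Finset V} {w : V → ℝ}
    (hw0 : ∀ v ∈ F, 0 ≤ w v) (hw1 : ∑ v ∈ F, w v = 1) (hc : ∑ v ∈ F, w v * ℓ v = c) :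
    ∑ v ∈ F, w v • v ∈ convexHull ℝ (hyperplaneCrossings ℓ c F : Set V) := by
  have hbal : ∑ a ∈ F.filter (ℓ · < c), w a * (c - ℓ a) =
      ∑ b ∈ F.filter (¬ ℓ · < c), w b * (ℓ b - c) := by
    have : ∑ v ∈ F, w v * (ℓ v - c) = 0 := by
      simp_rw [mul_sub, Finset.sum_sub_distrib, ← Finset.sum_mul, hw1, hc, one_mul, sub_self]
    rw [← Finset.sum_filter_add_sum_filter_not F (ℓ · < c)] at this
    rw [← neg_eq_iff_add_eq_zero.2 this, ← Finset.sum_neg_distrib]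
    exact Finset.sum_congr rfl fun _ _ => by ring
  have hHi : ∀ b ∈ F.filter (¬ ℓ · < c), 0 ≤ w b * (ℓ b - c) := fun b hb =>
    mul_nonneg (hw0 b (Finset.mem_filter.1 hb).1) (by simpa using (Finset.mem_filter.1 hb).2)
  have hLo : ∀ a ∈ F.filter (ℓ · < c), 0 ≤ w a * (c - ℓ a) := fun a ha =>
    mul_nonneg (hw0 a (Finset.mem_filter.1 ha).1)
      (by simpa using (Finset.mem_filter.1 ha).2.le)
  rcases (Finset.sum_nonneg hHi).eq_or_lt with hD | hD
  · refine sum_smul_mem_convexHull_of_weight_ne_zero hw0 hw1 fun v hv hwv => ?_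
    suffices ℓ v = c by
      simpa only [hyperplaneCrossing_self, Finset.mem_coe] using
        hyperplaneCrossing_mem_hyperplaneCrossings hv hv this.le this.ge
    by_contra hvc
    rcases lt_or_gt_of_ne hvc with hlt | hgt
    · exact mul_ne_zero hwv (sub_ne_zero.2 hlt.ne') <|
        (Finset.sum_eq_zero_iff_of_nonneg hLo).1 (hbal.trans hD.symm) v
          (Finset.mem_filter.2 ⟨hv, hlt⟩)
    · exact mul_ne_zero hwv (sub_ne_zero.2 hgt.ne') <|
        (Finset.sum_eq_zero_iff_of_nonneg hHi).1 hD.symm v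
          (Finset.mem_filter.2 ⟨hv, hgt.not_gt⟩)
  · exact sum_smul_mem_convexHull_hyperplaneCrossings_of_pos hw0 hw1 hD hbal

theorem convexHull_inter_hyperplane (F : Finset V) :
    convexHull ℝ (F : Set V) ∩ {x | ℓ x = c} =
      convexHull ℝ (hyperplaneCrossings ℓ c F : Set V) := by
  refine subset_antisymm ?_ (convexHull_hyperplaneCrossings_subset F)
  rintro _ ⟨hx, hxc⟩
  obtain ⟨w, hw0, hw1, rfl⟩ := Finset.mem_convexHull'.1 hx
  exact sum_smul_mem_convexHull_hyperplaneCrossings hw0 hw1 (by simpa [map_sum] using hxc)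

end Hyperplane

namespace IsPolytope

variable {E : Type*} [AddCommGroup E] [Module ℝ E]

theorem inter_hyperplane {P : Set E} (hP : IsPolytope P) (ℓ : E →ₗ[ℝ] ℝ) (c : ℝ) :
    IsPolytope (P ∩ {x | ℓ x = c}) := by
  obtain ⟨F, rfl⟩ := hP
  exact ⟨_, convexHull_inter_hyperplane F⟩

theorem inter_iInter_ker {ι : Type*} {P : Set E} (hP : IsPolytope P) (L : ι → E →ₗ[ℝ] ℝ)
    (s : Finset ι) : IsPolytope (P ∩ {x | ∀ i ∈ s, L i x = 0}) := by
  classical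
  induction s using Finset.induction_on with
  | empty => simpa using hP
  | insert j s _ ih =>
    convert ih.inter_hyperplane (L j) 0 using 1
    ext x
    simp only [Set.mem_inter_iff, Set.mem_ofPred_eq, Finset.forall_mem_insert]
    tauto

theorem inter_submodule [FiniteDimensional ℝ E] {P : Set E} (hP : IsPolytope P)
    (R : Submodule ℝ E) : IsPolytope (P ∩ R) := by
  let b := Module.finBasis ℝ (E ⧸ R)
  have hR : ∀ x, x ∈ R ↔ ∀ i, b.coord i (R.mkQ x) = 0 := fun x => by
    rw [b.forall_coord_eq_zero_iff, Submodule.mkQ_apply, Submodule.Quotient.mk_eq_zero]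
  convert hP.inter_iInter_ker (fun i => (b.coord i).comp R.mkQ) Finset.univ using 2
  ext x
  simp [hR]

theorem preimage_of_injective {F : Type*} [AddCommGroup F] [Module ℝ F] [FiniteDimensional ℝ F]
    {φ : E →ₗ[ℝ] F} (hφ : Function.Injective φ) {P : Set F} (hP : IsPolytope P) :
    IsPolytope (φ ⁻¹' P) := by
  classical
  obtain ⟨G, hG⟩ := hP.inter_submodule (LinearMap.range φ)
  have hGφ : Set.EqOn (φ ∘ Function.invFun φ) id G := fun y hy =>
    Function.invFun_eq (hG ▸ subset_convexHull ℝ _ hy).2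
  refine ⟨G.image (Function.invFun φ), ?_⟩
  have himage :
      φ '' convexHull ℝ (G.image (Function.invFun φ) : Set E) = P ∩ LinearMap.range φ := by
    rw [φ.image_convexHull, hG, Finset.coe_image, ← Set.image_comp, hGφ.image_eq_self]
  rw [← Set.preimage_inter_range, ← LinearMap.coe_range, ← himage, Set.preimage_image_eq _ hφ]

theorem pi {ι : Type*} [Fintype ι] {E : ι → Type*} [∀ i, AddCommGroup (E i)]
    [∀ i, Module ℝ (E i)] {Q : ∀ i, Set (E i)} (hQ : ∀ i, IsPolytope (Q i)) :
    IsPolytope (Set.univ.pi Q) := by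
  classical
  choose G hG using hQ
  exact ⟨Fintype.piFinset G, by rw [Fintype.coe_piFinset, convexHull_pi, funext hG]⟩

end IsPolytope

namespace AffineMap

variable {k V₁ P₁ V₂ : Type*} [CommRing k] [AddCommGroup V₁] [Module k V₁] [AddTorsor V₁ P₁]
  [AddCommGroup V₂] [Module k V₂]

def restrictₗ (S : Set P₁) : (P₁ →ᵃ[k] V₂) →ₗ[k] (S → V₂) where
  toFun f v := f v
  map_add' _ _ := rfl
  map_smul' _ _ := rfl

theorem restrictₗ_injective {S : Set P₁} (hS : affineSpan k S = ⊤) :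
    Function.Injective (restrictₗ (k := k) (V₂ := V₂) S) :=
  fun _ _ h => ext_on hS fun v hv => congrFun h ⟨v, hv⟩

end AffineMap

theorem stmt_6_general {V W : Type*}
    [AddCommGroup V] [Module ℝ V]
    [AddCommGroup W] [Module ℝ W] [FiniteDimensional ℝ W]
    (P : Set V) (Q : Set W)
    (hP : IsPolytope P) (hPspan : affineSpan ℝ P = ⊤)
    (hQ : IsPolytope Q) :
    ∃ F : Finset (V →ᵃ[ℝ] W),
      {f : V →ᵃ[ℝ] W | f '' P ⊆ Q} = convexHull ℝ (F : Set (V →ᵃ[ℝ] W)) := by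
  obtain ⟨S, rfl⟩ := hP
  have hQconv : Convex ℝ Q := by
    obtain ⟨G, rfl⟩ := hQ
    exact convex_convexHull ℝ _
  have hspan : affineSpan ℝ (S : Set V) = ⊤ := by rwa [← affineSpan_convexHull]
  have hhom : {f : V →ᵃ[ℝ] W | f '' convexHull ℝ (S : Set V) ⊆ Q} =
      AffineMap.restrictₗ (S : Set V) ⁻¹' Set.univ.pi fun _ => Q := by
    ext f
    rw [Set.mem_ofPred_eq, f.image_convexHull, hQconv.convexHull_subset_iff, Set.image_subset_iff]
    exact ⟨fun h v _ => h v.2, fun h v hv => h ⟨v, hv⟩ trivial⟩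
  rw [hhom]
  exact (IsPolytope.pi fun _ => hQ).preimage_of_injective
    (AffineMap.restrictₗ_injective hspan)

theorem stmt_6 {V W : Type*}
    [AddCommGroup V] [Module ℝ V] [FiniteDimensional ℝ V]
    [AddCommGroup W] [Module ℝ W] [FiniteDimensional ℝ W]
    (P : Set V) (Q : Set W)
    (hP : IsPolytope P) (hPspan : affineSpan ℝ P = ⊤)
    (hQ : IsPolytope Q) (hQne : Q.Nonempty) :
    ∃ F : Finset (V →ᵃ[ℝ] W),
      {f : V →ᵃ[ℝ] W | f '' P ⊆ Q} = convexHull ℝ (F : Set (V →ᵃ[ℝ] W)) :=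
  stmt_6_general P Q hP hPspan hQ
end

section
/- Let V and W be finite-dimensional real vector spaces, let P ⊆ V be a nonempty polytope with affineSpan ℝ P = ⊤, and let Q ⊆ W be a nonempty polytope with affineSpan ℝ Q = ⊤. Then the affine span of the hom-polytope Hom(P,Q) = {f : V →ᵃ[ℝ] W | f '' P ⊆ Q} is the entire vector space of affine maps V →ᵃ[ℝ] W; in particular, dim Hom(P,Q) = (dim V)·(dim W) + dim W = dim P · dim Q + dim Q. -/
open Filter Topology

theorem affineSpan_eq_top_of_forall_exists_smul_vadd_mem {k V P : Type*} [Field k]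
    [AddCommGroup V] [Module k V] [AddTorsor V P] {s : Set P} {x : P} (hx : x ∈ s)
    (h : ∀ v : V, ∃ t : k, t ≠ 0 ∧ t • v +ᵥ x ∈ s) : affineSpan k s = ⊤ := by
  refine eq_top_iff.2 fun y _ => ?_
  obtain ⟨t, ht, hts⟩ := h (y -ᵥ x)
  have hxs := subset_affineSpan k s hx
  simpa [smul_smul, ht] using
    (affineSpan k s).smul_vsub_vadd_mem t⁻¹ (subset_affineSpan k s hts) hxs hxs

theorem Convex.exists_forall_eventually_add_smul_mem {W : Type*} [AddCommGroup W] [Module ℝ W]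
    [FiniteDimensional ℝ W] {s : Set W} (hs : Convex ℝ s) (hspan : affineSpan ℝ s = ⊤) :
    ∃ x ∈ s, ∀ w : W, ∀ᶠ t in 𝓝 (0 : ℝ), x + t • w ∈ s := by
  -- `W` carries no topology; find an interior point in coordinates.
  let e := (Module.finBasis ℝ W).equivFun
  have hint : (interior (e '' s)).Nonempty :=
    (hs.linear_image e.toLinearMap).interior_nonempty_iff_affineSpan_eq_top.2
      ((e.toAffineEquiv.span_eq_top_iff).1 hspan)
  obtain ⟨y, hy⟩ := hint
  refine ⟨e.symm y, ?_, fun w => ?_⟩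
  · obtain ⟨x, hx, rfl⟩ := interior_subset hy
    simpa using hx
  have hlim : Tendsto (fun t : ℝ => y + t • e w) (𝓝 0) (𝓝 y) := by
    simpa using tendsto_const_nhds.add ((tendsto_id (x := 𝓝 (0 : ℝ))).smul_const (e w))
  filter_upwards [hlim.eventually (isOpen_interior.mem_nhds hy)] with t ht
  obtain ⟨x, hx, hxe⟩ := interior_subset ht
  convert hx using 1
  apply e.injective
  simp [hxe]

theorem affineSpan_setOf_image_convexHull_subset_eq_top {V W : Type*}
    [AddCommGroup V] [Module ℝ V] [AddCommGroup W] [Module ℝ W] [FiniteDimensional ℝ W]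
    (F : Finset V) {Q : Set W} (hQ : Convex ℝ Q) (hQspan : affineSpan ℝ Q = ⊤) :
    affineSpan ℝ {f : V →ᵃ[ℝ] W | f '' convexHull ℝ F ⊆ Q} = ⊤ := by
  obtain ⟨q, hq, hcore⟩ := hQ.exists_forall_eventually_add_smul_mem hQspan
  refine affineSpan_eq_top_of_forall_exists_smul_vadd_mem (x := AffineMap.const ℝ V q)
    (fun _ ⟨_, _, hp⟩ => hp ▸ hq) fun h => ?_
  have hsmall : ∀ᶠ t in 𝓝[≠] (0 : ℝ), ∀ p ∈ F, q + t • h p ∈ Q :=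
    (eventually_all_finset F).2 fun p _ => nhdsWithin_le_nhds (hcore (h p))
  obtain ⟨t, ht, ht0⟩ := (hsmall.and self_mem_nhdsWithin).exists
  refine ⟨t, ht0, ?_⟩
  show ⇑(t • h +ᵥ AffineMap.const ℝ V q) '' convexHull ℝ F ⊆ Q
  rw [AffineMap.image_convexHull, hQ.convexHull_subset_iff]
  rintro _ ⟨p, hp, rfl⟩
  simpa [add_comm] using ht p hp

theorem Module.finrank_affineMap {k V W : Type*} [Field k] [AddCommGroup V] [Module k V]
    [FiniteDimensional k V] [AddCommGroup W] [Module k W] [FiniteDimensional k W] :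
    Module.finrank k (V →ᵃ[k] W) = Module.finrank k V * Module.finrank k W + Module.finrank k W := by
  rw [(AffineMap.toConstProdLinearMap k).finrank_eq, Module.finrank_prod,
    Module.finrank_linearMap, add_comm]

theorem stmt_7_general {V W : Type*}
    [AddCommGroup V] [Module ℝ V] [FiniteDimensional ℝ V]
    [AddCommGroup W] [Module ℝ W] [FiniteDimensional ℝ W]
    (P : Set V) (Q : Set W)
    (hP : IsPolytope P)
    (hQ : IsPolytope Q) (hQspan : affineSpan ℝ Q = ⊤) :
    affineSpan ℝ {f : V →ᵃ[ℝ] W | f '' P ⊆ Q} = ⊤ ∧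
    Module.finrank ℝ (V →ᵃ[ℝ] W) =
      Module.finrank ℝ V * Module.finrank ℝ W + Module.finrank ℝ W := by
  obtain ⟨F, rfl⟩ := hP
  obtain ⟨G, rfl⟩ := hQ
  exact ⟨affineSpan_setOf_image_convexHull_subset_eq_top F (convex_convexHull ℝ _) hQspan,
    Module.finrank_affineMap⟩

theorem stmt_7 {V W : Type*}
    [AddCommGroup V] [Module ℝ V] [FiniteDimensional ℝ V]
    [AddCommGroup W] [Module ℝ W] [FiniteDimensional ℝ W]
    (P : Set V) (Q : Set W)
    (hP : IsPolytope P) (hPne : P.Nonempty) (hPspan : affineSpan ℝ P = ⊤)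
    (hQ : IsPolytope Q) (hQne : Q.Nonempty) (hQspan : affineSpan ℝ Q = ⊤) :
    affineSpan ℝ {f : V →ᵃ[ℝ] W | f '' P ⊆ Q} = ⊤ ∧
    Module.finrank ℝ (V →ᵃ[ℝ] W) =
      Module.finrank ℝ V * Module.finrank ℝ W + Module.finrank ℝ W :=
  stmt_7_general P Q hP hQ hQspan
end

section
/- Let V and W be finite-dimensional real vector spaces, let P ⊆ V be a nonempty polytope with affineSpan ℝ P = ⊤, and let Q ⊆ W be a nonempty polytope. For every vertex w of Q (i.e., w ∈ extremePoints ℝ Q), the constant affine map f : V →ᵃ[ℝ] W with f(x) = w for all x is a vertex (extreme point) of the hom-polytope Hom(P,Q) = {f : V →ᵃ[ℝ] W | f '' P ⊆ Q}. -/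
theorem AffineMap.apply_mem_openSegment {𝕜 V P W : Type*} [CommRing 𝕜] [PartialOrder 𝕜]
    [AddCommGroup V] [Module 𝕜 V] [AddTorsor V P] [AddCommGroup W] [Module 𝕜 W]
    {f g h : P →ᵃ[𝕜] W} (hf : f ∈ openSegment 𝕜 g h) (x : P) :
    f x ∈ openSegment 𝕜 (g x) (h x) := by
  obtain ⟨a, b, ha, hb, hab, rfl⟩ := hf
  exact ⟨a, b, ha, hb, hab, rfl⟩

theorem stmt_9_general {V W : Type*}
    [AddCommGroup V] [Module ℝ V]
    [AddCommGroup W] [Module ℝ W]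
    (P : Set V) (Q : Set W)
    (hPspan : affineSpan ℝ P = ⊤)
    (w : W) (hw : w ∈ Set.extremePoints ℝ Q) :
    AffineMap.const ℝ V w ∈
      Set.extremePoints ℝ {f : V →ᵃ[ℝ] W | f '' P ⊆ Q} := by
  refine ⟨?_, fun f hf g hg hfg ↦ ?_⟩
  · rintro _ ⟨x, -, rfl⟩
    exact hw.1
  · refine AffineMap.ext_on hPspan fun x hx ↦ ?_
    exact hw.2 (hf ⟨x, hx, rfl⟩) (hg ⟨x, hx, rfl⟩) (AffineMap.apply_mem_openSegment hfg x)

theorem stmt_9 {V W : Type*}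
    [AddCommGroup V] [Module ℝ V] [FiniteDimensional ℝ V]
    [AddCommGroup W] [Module ℝ W] [FiniteDimensional ℝ W]
    (P : Set V) (Q : Set W)
    (hP : IsPolytope P) (hPne : P.Nonempty) (hPspan : affineSpan ℝ P = ⊤)
    (hQ : IsPolytope Q) (hQne : Q.Nonempty)
    (w : W) (hw : w ∈ Set.extremePoints ℝ Q) :
    AffineMap.const ℝ V w ∈
      Set.extremePoints ℝ {f : V →ᵃ[ℝ] W | f '' P ⊆ Q} :=
  stmt_9_general P Q hPspan w hw
end

section
/- Let V and W be finite-dimensional real vector spaces, let n be a natural number, and let v : Fin (n+1) → V be an affinely independent family of points whose affine span is all of V, so that σ := convexHull ℝ (Set.range v) is an n-dimensional simplex. Let Q ⊆ W be a nonempty polytope. Then the evaluation map f ↦ (fun i => f (v i)) is a bijection from the hom-polytope Hom(σ,Q) = {f : V →ᵃ[ℝ] W | f '' σ ⊆ Q} onto the set {g : Fin (n+1) → W | ∀ i, g i ∈ Q}; in particular, Hom(σ,Q) is affinely isomorphic to Q^{n+1}, and every map from the vertices of σ to Q extends uniquely to an affine map σ → Q. -/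
theorem stmt_10 {V W : Type*}
    [AddCommGroup V] [Module ℝ V] [FiniteDimensional ℝ V]
    [AddCommGroup W] [Module ℝ W] [FiniteDimensional ℝ W]
    (n : ℕ) (v : Fin (n + 1) → V)
    (hv : AffineIndependent ℝ v) (hvspan : affineSpan ℝ (Set.range v) = ⊤)
    (Q : Set W) (hQ : IsPolytope Q) (hQne : Q.Nonempty) :
    Set.BijOn (fun f : V →ᵃ[ℝ] W => fun i : Fin (n + 1) => f (v i))
      {f : V →ᵃ[ℝ] W | f '' convexHull ℝ (Set.range v) ⊆ Q}
      {g : Fin (n + 1) → W | ∀ i, g i ∈ Q} := by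
  classical
  obtain ⟨F, hF⟩ := hQ
  have hQconv : Convex ℝ Q := hF ▸ convex_convexHull ℝ _
  -- membership characterization
  have hmem : ∀ f : V →ᵃ[ℝ] W,
      f '' convexHull ℝ (Set.range v) ⊆ Q ↔ ∀ i, f (v i) ∈ Q := by
    intro f
    rw [AffineMap.image_convexHull]
    constructor
    · intro h i
      exact h (subset_convexHull ℝ _ ⟨v i, ⟨i, rfl⟩, rfl⟩)
    · intro h
      apply convexHull_min _ hQconv
      rintro _ ⟨_, ⟨i, rfl⟩, rfl⟩
      exact h i
  set b : AffineBasis (Fin (n + 1)) ℝ V := ⟨v, hv, hvspan⟩ with hb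
  have hbv : ∀ i, b i = v i := fun i => rfl
  refine ⟨fun f hf i => (hmem f).1 hf i, ?_, ?_⟩
  · -- injectivity
    intro f hf g hg h
    ext p
    obtain ⟨w, hw, rfl⟩ :=
      eq_affineCombination_of_mem_affineSpan_of_fintype
        (by rw [hvspan]; exact AffineSubspace.mem_top ℝ V p)
    rw [Finset.map_affineCombination _ _ _ hw, Finset.map_affineCombination _ _ _ hw]
    have hc : (⇑f ∘ v) = (⇑g ∘ v) := funext fun i => congrFun h i
    rw [hc]
  · -- surjectivity
    rintro g hg
    refine ⟨{ toFun := fun p => ∑ i, b.coord i p • g i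
              linear := ∑ i, ((b.coord i).linear).smulRight (g i)
              map_vadd' := ?_ }, ?_, ?_⟩
    · intro p u
      simp only [LinearMap.coe_sum, Finset.sum_apply, LinearMap.smulRight_apply,
        vadd_eq_add, ← Finset.sum_add_distrib]
      refine Finset.sum_congr rfl fun i _ => ?_
      have h1 : (b.coord i) (u + p) = (b.coord i).linear u + (b.coord i) p := by
        simpa [vadd_eq_add] using (b.coord i).map_vadd p u
      rw [h1, add_smul]
    · rw [Set.mem_setOf_eq, hmem]
      intro i
      show (∑ j, b.coord j (v i) • g j) ∈ Q
      have : (∑ j, b.coord j (v i) • g j) = g i := by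
        rw [Finset.sum_eq_single i]
        · rw [← hbv, b.coord_apply]; simp
        · intro j _ hj
          rw [← hbv, b.coord_apply, if_neg hj, zero_smul]
        · simp
      simpa [this] using hg i
    · funext i
      show (∑ j, b.coord j (v i) • g j) = g i
      rw [Finset.sum_eq_single i]
      · rw [← hbv, b.coord_apply]; simp
      · intro j _ hj
        rw [← hbv, b.coord_apply, if_neg hj, zero_smul]
      · simp
end

section
/- Let V, W, U be finite-dimensional real vector spaces, let P ⊆ V be a nonempty polytope with affineSpan ℝ P = ⊤, let Q ⊆ W be a nonempty polytope with affineSpan ℝ Q = ⊤, and let R ⊆ U be a nonempty polytope. Let join(P,Q) := convexHull ℝ ({(x,0,0) : x ∈ P} ∪ {(0,y,1) : y ∈ Q}) ⊆ V × W × ℝ. Then the map h ↦ (h ∘ ι_P, h ∘ ι_Q), where ι_P : V →ᵃ[ℝ] V × W × ℝ sends x to (x,0,0) and ι_Q : W →ᵃ[ℝ] V × W × ℝ sends y to (0,y,1), is a bijection from {h : V × W × ℝ →ᵃ[ℝ] U | h '' join(P,Q) ⊆ R} onto {f : V →ᵃ[ℝ] U | f '' P ⊆ R} × {g : W →ᵃ[ℝ]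 U | g '' Q ⊆ R}. In other words, join(P,Q) is the coproduct of P and Q in the category of polytopes and affine maps. -/
/-- The join of two polytopes `P ⊆ V` and `Q ⊆ W`, realized in `V × W × ℝ`. -/
def polytopeJoin {V W : Type*} [AddCommGroup V] [Module ℝ V] [AddCommGroup W] [Module ℝ W]
    (P : Set V) (Q : Set W) : Set (V × W × ℝ) :=
  convexHull ℝ
    (((fun x => (x, (0 : W), (0 : ℝ))) '' P) ∪ ((fun y => ((0 : V), y, (1 : ℝ))) '' Q))

/-- The affine embedding `V → V × W × ℝ`, `x ↦ (x, 0, 0)`. -/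
noncomputable def iotaP (V W : Type*) [AddCommGroup V] [Module ℝ V]
    [AddCommGroup W] [Module ℝ W] : V →ᵃ[ℝ] V × W × ℝ :=
  (LinearMap.prod LinearMap.id (0 : V →ₗ[ℝ] W × ℝ)).toAffineMap

/-- The affine embedding `W → V × W × ℝ`, `y ↦ (0, y, 1)`. -/
noncomputable def iotaQ (V W : Type*) [AddCommGroup V] [Module ℝ V]
    [AddCommGroup W] [Module ℝ W] : W →ᵃ[ℝ] V × W × ℝ :=
  (LinearMap.prod (0 : W →ₗ[ℝ] V) (LinearMap.prod LinearMap.id (0 : W →ₗ[ℝ] ℝ))).toAffineMap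
    + AffineMap.const ℝ W ((0 : V), (0 : W), (1 : ℝ))

lemma iotaP_apply {V W : Type*} [AddCommGroup V] [Module ℝ V] [AddCommGroup W] [Module ℝ W]
    (x : V) : iotaP V W x = (x, 0, 0) := rfl

lemma iotaQ_apply {V W : Type*} [AddCommGroup V] [Module ℝ V] [AddCommGroup W] [Module ℝ W]
    (y : W) : iotaQ V W y = (0, y, 1) := by
  simp [iotaQ, Prod.ext_iff]

/-- Gluing two affine maps into a map on the join ambient space. -/
noncomputable def glueMap {V W U : Type*} [AddCommGroup V] [Module ℝ V]
    [AddCommGroup W] [Module ℝ W] [AddCommGroup U] [Module ℝ U]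
    (f : V →ᵃ[ℝ] U) (g : W →ᵃ[ℝ] U) : V × W × ℝ →ᵃ[ℝ] U where
  toFun := fun p => f.linear p.1 + g.linear p.2.1 + p.2.2 • (g 0 - f 0) + f 0
  linear := f.linear.comp (LinearMap.fst ℝ V (W × ℝ)) +
      g.linear.comp ((LinearMap.fst ℝ W ℝ).comp (LinearMap.snd ℝ V (W × ℝ))) +
      LinearMap.smulRight ((LinearMap.snd ℝ W ℝ).comp (LinearMap.snd ℝ V (W × ℝ))) (g 0 - f 0)
  map_vadd' := by
    intro p v
    simp only [LinearMap.add_apply, LinearMap.comp_apply, LinearMap.fst_apply,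
      LinearMap.snd_apply, LinearMap.smulRight_apply, vadd_eq_add, Prod.fst_add, Prod.snd_add,
      map_add, add_smul]
    abel

lemma affine_apply {V U : Type*} [AddCommGroup V] [Module ℝ V] [AddCommGroup U] [Module ℝ U]
    (f : V →ᵃ[ℝ] U) (x : V) : f x = f.linear x + f 0 := by
  have := f.map_vadd 0 x
  simpa using this

theorem stmt_11 {V W U : Type*}
    [AddCommGroup V] [Module ℝ V] [FiniteDimensional ℝ V]
    [AddCommGroup W] [Module ℝ W] [FiniteDimensional ℝ W]
    [AddCommGroup U] [Module ℝ U] [FiniteDimensional ℝ U]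
    (P : Set V) (Q : Set W) (R : Set U)
    (hP : IsPolytope P) (hPne : P.Nonempty) (hPspan : affineSpan ℝ P = ⊤)
    (hQ : IsPolytope Q) (hQne : Q.Nonempty) (hQspan : affineSpan ℝ Q = ⊤)
    (hR : IsPolytope R) (hRne : R.Nonempty) :
    Set.BijOn
      (fun h : V × W × ℝ →ᵃ[ℝ] U => (h.comp (iotaP V W), h.comp (iotaQ V W)))
      {h : V × W × ℝ →ᵃ[ℝ] U | h '' polytopeJoin P Q ⊆ R}
      ({f : V →ᵃ[ℝ] U | f '' P ⊆ R} ×ˢ {g : W →ᵃ[ℝ] U | g '' Q ⊆ R}) := by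
  obtain ⟨FR, hFR⟩ := hR
  have hRconv : Convex ℝ R := hFR ▸ convex_convexHull ℝ _
  have hPsub : (fun x => (x, (0 : W), (0 : ℝ))) '' P ⊆ polytopeJoin P Q :=
    (Set.subset_union_left).trans (subset_convexHull ℝ _)
  have hQsub : (fun y => ((0 : V), y, (1 : ℝ))) '' Q ⊆ polytopeJoin P Q :=
    (Set.subset_union_right).trans (subset_convexHull ℝ _)
  refine ⟨?_, ?_, ?_⟩
  · -- MapsTo
    intro h hh
    constructor
    · intro u ⟨x, hx, hxu⟩
      exact hh ⟨(x, 0, 0), hPsub ⟨x, hx, rfl⟩, by simpa [iotaP_apply] using hxu⟩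
    · intro u ⟨y, hy, hyu⟩
      exact hh ⟨(0, y, 1), hQsub ⟨y, hy, rfl⟩, by simpa [iotaQ_apply] using hyu⟩
  · -- InjOn
    intro h₁ h₁m h₂ h₂m heq
    simp only [Prod.mk.injEq] at heq
    obtain ⟨hfP, hfQ⟩ := heq
    have hP' : ∀ x : V, h₁ (x, 0, 0) = h₂ (x, 0, 0) := fun x => by
      have := congrArg (fun f => f x) hfP
      simpa [iotaP_apply] using this
    have hQ' : ∀ y : W, h₁ (0, y, 1) = h₂ (0, y, 1) := fun y => by
      have := congrArg (fun f => f y) hfQ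
      simpa [iotaQ_apply] using this
    ext ⟨x, y, t⟩
    have h0 : h₁ (0, 0, 0) = h₂ (0, 0, 0) := hP' 0
    have key : ∀ h : V × W × ℝ →ᵃ[ℝ] U, h (x, y, t) =
        h (x, 0, 0) + (h (0, y, 1) - h (0, 0, 1)) + t • (h (0, 0, 1) - h (0, 0, 0)) := by
      intro h
      have e1 : h (x, 0, 0) = h.linear (x, 0, 0) + h 0 := affine_apply h _
      have e2 : h (0, y, 1) = h.linear (0, y, 1) + h 0 := affine_apply h _
      have e3 : h (0, 0, 1) = h.linear (0, 0, 1) + h 0 := affine_apply h _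
      have e4 : h (x, y, t) = h.linear (x, y, t) + h 0 := affine_apply h _
      have hdec : (x, y, t) = ((x, 0, 0) : V × W × ℝ) + ((0, y, 1) - (0, 0, 1))
          + t • (((0, 0, 1) : V × W × ℝ) - (0, 0, 0)) := by
        simp [Prod.ext_iff]
      have : ((0,0,0) : V × W × ℝ) = 0 := rfl
      rw [e4, hdec]
      simp only [map_add, map_smul, map_sub]
      rw [this] at *
      rw [e1, e2, e3]
      simp
      abel
    rw [key h₁, key h₂, hP' x, hQ' y, hQ' 0, h0]
  · -- SurjOn
    rintro ⟨f, g⟩ ⟨hf, hg⟩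
    refine ⟨glueMap f g, ?_, ?_⟩
    · -- glueMap maps join into R
      show glueMap f g '' polytopeJoin P Q ⊆ R
      rw [polytopeJoin, AffineMap.image_convexHull]
      refine (convexHull_min ?_ hRconv)
      rw [Set.image_union, Set.image_image, Set.image_image]
      apply Set.union_subset
      · intro u ⟨x, hx, hxu⟩
        dsimp only at hxu
        have : glueMap f g (x, 0, 0) = f x := by
          simp [glueMap, affine_apply f x]
        exact hf ⟨x, hx, by rw [← hxu, this]⟩
      · intro u ⟨y, hy, hyu⟩
        dsimp only at hyu
        have : glueMap f g (0, y, 1) = g y := by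
          simp [glueMap, affine_apply g y]
          abel
        exact hg ⟨y, hy, by rw [← hyu, this]⟩
    · simp only [Prod.mk.injEq]
      constructor
      · ext x
        simp [glueMap, iotaP_apply, AffineMap.comp_apply, affine_apply f x]
      · ext y
        simp only [AffineMap.comp_apply, iotaQ_apply]
        show f.linear 0 + g.linear y + (1 : ℝ) • (g 0 - f 0) + f 0 = g y
        rw [affine_apply g y]
        simp
        abel
end

section
/- Let V and W be finite-dimensional real vector spaces and let P ⊆ V and Q ⊆ W be nonempty polytopes. Define the tensor product polytope P ⊗ Q := convexHull ℝ {(x ⊗ y, x, y) : x ∈ extremePoints ℝ P, y ∈ extremePoints ℝ Q} ⊆ (V ⊗[ℝ] W) × V × W. Then the set of extreme points of P ⊗ Q is exactly {(x ⊗ y, x, y) : x ∈ extremePoints ℝ P, y ∈ extremePoints ℝ Q}; i.e., the vertices of P ⊗ Q are precisely the points (v ⊗ w, v, w) for v a vertex of P and w a vertex of Q. -/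
/-!
A generator `s` of a convex hull is a vertex of it as soon as `s` lies outside the hull of the
other generators. For `s = (x ⊗ y, x, y)`, the other generators project to `P × Q \ {(x, y)}`,
which is convex because `(x, y)` is a vertex of `P × Q`; so their hull projects away from `(x, y)`.
-/

open scoped TensorProduct

/-- The tensor product of two polytopes `P ⊆ V` and `Q ⊆ W`:
the convex hull of `{(x ⊗ y, x, y) : x a vertex of P, y a vertex of Q}`
in `(V ⊗[ℝ] W) × V × W`. -/
def tensorPolytope {V W : Type*} [AddCommGroup V] [Module ℝ V] [AddCommGroup W] [Module ℝ W]
    (P : Set V) (Q : Set W) : Set ((V ⊗[ℝ] W) × V × W) :=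
  convexHull ℝ
    {p | ∃ x ∈ Set.extremePoints ℝ P, ∃ y ∈ Set.extremePoints ℝ Q,
      p = (x ⊗ₜ[ℝ] y, x, y)}

open Set

theorem mem_extremePoints_convexHull_of_notMem_convexHull_sdiff {𝕜 E : Type*} [Field 𝕜]
    [LinearOrder 𝕜] [IsStrictOrderedRing 𝕜] [AddCommGroup E] [Module 𝕜 E] {s : Set E} {x : E}
    (hxs : x ∈ s) (hx : x ∉ convexHull 𝕜 (s \ {x})) :
    x ∈ (convexHull 𝕜 s).extremePoints 𝕜 := by
  rcases (s \ {x}).eq_empty_or_nonempty with hempty | hne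
  · rw [sdiff_eq_empty, subset_singleton_iff_eq] at hempty
    rcases hempty with rfl | rfl
    · exact absurd hxs (notMem_empty x)
    · simp
  refine mem_extremePoints_iff_left.2 ⟨subset_convexHull 𝕜 s hxs, ?_⟩
  rw [← insert_eq_of_mem hxs, ← insert_sdiff_singleton, convexHull_insert hne,
    convexJoin_singleton_left]
  simp only [mem_iUnion]
  rintro _ ⟨a', ha', α, α', hα, hα', hαα', rfl⟩ _ ⟨b', hb', β, β', hβ, hβ', hββ', rfl⟩
    ⟨l, m, hl, hm, hlm, hx_eq⟩
  set c := l * α' + m * β'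
  have hcx : c • x = (l * α') • a' + (m * β') • b' := by
    linear_combination (norm := module) -hx_eq + (l * hαα' + m * hββ' + hlm) • x
  -- if `c ≠ 0`, rescaling `hcx` puts `x` in the hull of `s \ {x}`
  have hc : c = 0 := by
    by_contra hc
    refine hx ?_
    convert (convex_convexHull 𝕜 _) ha' hb' (by positivity : 0 ≤ l * α' / c)
      (by positivity : 0 ≤ m * β' / c) (by rw [← add_div, div_self hc]) using 1
    apply smul_right_injective E hc
    simp only [hcx, smul_add, smul_smul, mul_div_cancel₀ _ hc]
  have hα'0 : α' = 0 := by nlinarith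
  simp [hα'0, show α = 1 by linarith]

theorem stmt_13_general {V W : Type*}
    [AddCommGroup V] [Module ℝ V]
    [AddCommGroup W] [Module ℝ W]
    (P : Set V) (Q : Set W)
    (hP : IsPolytope P)
    (hQ : IsPolytope Q) :
    Set.extremePoints ℝ (tensorPolytope P Q) =
      {p | ∃ x ∈ Set.extremePoints ℝ P, ∃ y ∈ Set.extremePoints ℝ Q,
        p = (x ⊗ₜ[ℝ] y, x, y)} := by
  refine Subset.antisymm extremePoints_convexHull_subset ?_
  rintro _ ⟨x, hx, y, hy, rfl⟩
  obtain ⟨F, rfl⟩ := hP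
  obtain ⟨G, rfl⟩ := hQ
  have hPQ : Convex ℝ (convexHull ℝ F ×ˢ convexHull ℝ G \ {(x, y)}) :=
    ((convex_convexHull ℝ _).prod (convex_convexHull ℝ _)).mem_extremePoints_iff_convex_sdiff.1
      (by rw [extremePoints_prod]; exact ⟨hx, hy⟩) |>.2
  refine mem_extremePoints_convexHull_of_notMem_convexHull_sdiff ⟨x, hx, y, hy, rfl⟩ fun hmem ↦ ?_
  refine (convexHull_min ?_ (hPQ.linear_preimage (LinearMap.snd ℝ _ _)) hmem).2 rfl
  rintro _ ⟨⟨x', hx', y', hy', rfl⟩, hne⟩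
  refine ⟨⟨extremePoints_subset hx', extremePoints_subset hy'⟩, fun h ↦ hne ?_⟩
  obtain ⟨rfl, rfl⟩ := Prod.mk.inj h
  rfl

theorem stmt_13 {V W : Type*}
    [AddCommGroup V] [Module ℝ V] [FiniteDimensional ℝ V]
    [AddCommGroup W] [Module ℝ W] [FiniteDimensional ℝ W]
    (P : Set V) (Q : Set W)
    (hP : IsPolytope P) (hPne : P.Nonempty)
    (hQ : IsPolytope Q) (hQne : Q.Nonempty) :
    Set.extremePoints ℝ (tensorPolytope P Q) =
      {p | ∃ x ∈ Set.extremePoints ℝ P, ∃ y ∈ Set.extremePoints ℝ Q,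
        p = (x ⊗ₜ[ℝ] y, x, y)} :=
  stmt_13_general P Q hP hQ
end

section
/- Let V and W be finite-dimensional real vector spaces, let P ⊆ V be a nonempty polytope with affineSpan ℝ P = ⊤, and let Q ⊆ W be a nonempty polytope with affineSpan ℝ Q = ⊤. Then the affine span of the tensor product polytope P ⊗ Q ⊆ (V ⊗[ℝ] W) × V × W is the whole ambient space; in particular, dim (P ⊗ Q) = dim P · dim Q + dim P + dim Q. -/
open scoped TensorProduct

/-!
For a fixed `y` the point `(x ⊗ y, x, y)` depends affinely on `x`, and for a fixed `x` affinely
on `y`. A polytope is the convex hull of its vertices (Krein–Milman, applied in coordinates), so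
the vertices of `P` and `Q` affinely span `V` and `W`, and the affine span of the vertex points of
`P ⊗ Q` contains `(x ⊗ y, x, y)` for all `x`, `y`. It contains `0`, hence is a linear subspace,
and it contains `(0, x, 0)`, `(0, 0, y)` and so `(x ⊗ y, 0, 0)`; pure tensors span `V ⊗ W`.
-/

theorem Set.Finite.convexHull_extremePoints_convexHull {E : Type*} [AddCommGroup E]
    [Module ℝ E] [TopologicalSpace E] [T2Space E] [IsTopologicalAddGroup E] [ContinuousSMul ℝ E]
    [LocallyConvexSpace ℝ E] {F : Set E} (hF : F.Finite) :
    convexHull ℝ ((convexHull ℝ F).extremePoints ℝ) = convexHull ℝ F := by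
  have hext : ((convexHull ℝ F).extremePoints ℝ).Finite := hF.subset extremePoints_convexHull_subset
  rw [← (hext.isCompact_convexHull (𝕜 := ℝ)).isClosed.closure_eq]
  exact closure_convexHull_extremePoints (hF.isCompact_convexHull (𝕜 := ℝ)) (convex_convexHull ℝ F)

theorem LinearEquiv.image_convexHull_extremePoints {V E : Type*} [AddCommGroup V] [Module ℝ V]
    [AddCommGroup E] [Module ℝ E] (e : V ≃ₗ[ℝ] E) (s : Set V) :
    e '' convexHull ℝ (s.extremePoints ℝ) = convexHull ℝ ((e '' s).extremePoints ℝ) := by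
  rw [← image_extremePoints, ← e.coe_toLinearMap, LinearMap.image_convexHull]

namespace IsPolytope

variable {V : Type*} [AddCommGroup V] [Module ℝ V] [FiniteDimensional ℝ V] {P : Set V}

theorem convexHull_extremePoints (hP : IsPolytope P) : convexHull ℝ (P.extremePoints ℝ) = P := by
  obtain ⟨F, rfl⟩ := hP
  let e := (Module.finBasis ℝ V).equivFun
  apply e.injective.image_injective
  rw [e.image_convexHull_extremePoints, ← e.coe_toLinearMap, LinearMap.image_convexHull]
  exact (F.finite_toSet.image _).convexHull_extremePoints_convexHull

theorem affineSpan_extremePoints (hP : IsPolytope P) :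
    affineSpan ℝ (P.extremePoints ℝ) = affineSpan ℝ P := by
  rw [← affineSpan_convexHull, hP.convexHull_extremePoints]

end IsPolytope

theorem AffineMap.mem_affineSpan_image_of_affineSpan_eq_top {k V₁ P₁ V₂ P₂ : Type*} [Ring k]
    [AddCommGroup V₁] [Module k V₁] [AddTorsor V₁ P₁] [AddCommGroup V₂] [Module k V₂]
    [AddTorsor V₂ P₂] (f : P₁ →ᵃ[k] P₂) {s : Set P₁} (hs : affineSpan k s = ⊤) (p : P₁) :
    f p ∈ affineSpan k (f '' s) := by
  rw [← AffineSubspace.map_span, hs]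
  exact AffineSubspace.mem_map_of_mem f (AffineSubspace.mem_top k V₁ p)

section TensorGraph

variable {R V W : Type*} [CommRing R] [AddCommGroup V] [Module R V] [AddCommGroup W] [Module R W]

variable (R) in
def tmulGraph (x : V) (y : W) : (V ⊗[R] W) × V × W := (x ⊗ₜ y, x, y)

def tmulGraphLeft (y : W) : V →ᵃ[R] (V ⊗[R] W) × V × W where
  toFun x := tmulGraph R x y
  linear := ((TensorProduct.mk R V W).flip y).prod (LinearMap.inl R V W)
  map_vadd' x v := by simp [tmulGraph, TensorProduct.add_tmul]

def tmulGraphRight (x : V) : W →ᵃ[R] (V ⊗[R] W) × V × W where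
  toFun y := tmulGraph R x y
  linear := (TensorProduct.mk R V W x).prod (LinearMap.inr R V W)
  map_vadd' y w := by simp [tmulGraph, TensorProduct.tmul_add]

theorem Submodule.eq_top_of_forall_tmulGraph_mem (M : Submodule R ((V ⊗[R] W) × V × W))
    (hM : ∀ x y, tmulGraph R x y ∈ M) : M = ⊤ := by
  have hV (x : V) : ((0 : V ⊗[R] W), x, (0 : W)) ∈ M := by simpa [tmulGraph] using hM x 0
  have hW (y : W) : ((0 : V ⊗[R] W), (0 : V), y) ∈ M := by simpa [tmulGraph] using hM 0 y
  have hT (t : V ⊗[R] W) : (t, (0 : V), (0 : W)) ∈ M := by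
    induction t using TensorProduct.induction_on with
    | zero => exact M.zero_mem
    | tmul x y =>
      convert M.sub_mem (M.sub_mem (hM x y) (hV x)) (hW y) using 1
      simp [tmulGraph]
    | add t t' ht ht' => simpa using M.add_mem ht ht'
  refine eq_top_iff.2 fun ⟨t, x, y⟩ _ => ?_
  convert M.add_mem (M.add_mem (hT t) (hV x)) (hW y) using 1
  simp

theorem affineSpan_image2_tmulGraph_eq_top {s : Set V} {t : Set W} (hs : affineSpan R s = ⊤)
    (ht : affineSpan R t = ⊤) : affineSpan R (Set.image2 (tmulGraph R) s t) = ⊤ := by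
  set A := affineSpan R (Set.image2 (tmulGraph R) s t)
  have hleft (x : V) {y : W} (hy : y ∈ t) : tmulGraph R x y ∈ A :=
    affineSpan_mono R (Set.image_subset_image2_left hy)
      ((tmulGraphLeft y).mem_affineSpan_image_of_affineSpan_eq_top hs x)
  have hall (x : V) (y : W) : tmulGraph R x y ∈ A := by
    refine affineSpan_le.2 ?_ ((tmulGraphRight x).mem_affineSpan_image_of_affineSpan_eq_top ht y)
    rintro _ ⟨y, hy, rfl⟩
    exact hleft x hy
  rw [← AffineSubspace.direction_eq_top_iff_of_nonempty ⟨_, hall 0 0⟩]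
  refine A.direction.eq_top_of_forall_tmulGraph_mem fun x y => ?_
  simpa [tmulGraph] using AffineSubspace.vsub_mem_direction (hall x y) (hall 0 0)

end TensorGraph

theorem stmt_14_general {V W : Type*}
    [AddCommGroup V] [Module ℝ V] [FiniteDimensional ℝ V]
    [AddCommGroup W] [Module ℝ W] [FiniteDimensional ℝ W]
    (P : Set V) (Q : Set W)
    (hP : IsPolytope P) (hPspan : affineSpan ℝ P = ⊤)
    (hQ : IsPolytope Q) (hQspan : affineSpan ℝ Q = ⊤) :
    affineSpan ℝ (tensorPolytope P Q) = ⊤ ∧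
    Module.finrank ℝ ((V ⊗[ℝ] W) × V × W) =
      Module.finrank ℝ V * Module.finrank ℝ W
        + Module.finrank ℝ V + Module.finrank ℝ W := by
  refine ⟨?_, by rw [Module.finrank_prod, Module.finrank_prod, Module.finrank_tensorProduct]; ring⟩
  have hvertices : {p | ∃ x ∈ P.extremePoints ℝ, ∃ y ∈ Q.extremePoints ℝ, p = (x ⊗ₜ[ℝ] y, x, y)}
      = Set.image2 (tmulGraph ℝ) (P.extremePoints ℝ) (Q.extremePoints ℝ) := by
    ext p
    simp [tmulGraph, eq_comm]
  rw [tensorPolytope, affineSpan_convexHull, hvertices]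
  exact affineSpan_image2_tmulGraph_eq_top (hP.affineSpan_extremePoints.trans hPspan)
    (hQ.affineSpan_extremePoints.trans hQspan)

theorem stmt_14 {V W : Type*}
    [AddCommGroup V] [Module ℝ V] [FiniteDimensional ℝ V]
    [AddCommGroup W] [Module ℝ W] [FiniteDimensional ℝ W]
    (P : Set V) (Q : Set W)
    (hP : IsPolytope P) (hPne : P.Nonempty) (hPspan : affineSpan ℝ P = ⊤)
    (hQ : IsPolytope Q) (hQne : Q.Nonempty) (hQspan : affineSpan ℝ Q = ⊤) :
    affineSpan ℝ (tensorPolytope P Q) = ⊤ ∧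
    Module.finrank ℝ ((V ⊗[ℝ] W) × V × W) =
      Module.finrank ℝ V * Module.finrank ℝ W
        + Module.finrank ℝ V + Module.finrank ℝ W :=
  stmt_14_general P Q hP hPspan hQ hQspan
end

section
/- Let V, W, U be finite-dimensional real vector spaces, let P ⊆ V be a nonempty polytope with affineSpan ℝ P = ⊤, let Q ⊆ W be a nonempty polytope with affineSpan ℝ Q = ⊤, and let R ⊆ U be a nonempty polytope. Then the map Θ sending an affine map f : (V ⊗[ℝ] W) × V × W →ᵃ[ℝ] U to the map Θ(f) : V →ᵃ[ℝ] (W →ᵃ[ℝ] U) defined by (Θ(f) x) y = f (x ⊗ y, x, y) is well-defined (i.e., Θ(f) x is affine in y and x ↦ Θ(f) x is affine) and restricts to a bijection from {f : (V ⊗[ℝ] W) × V × W →ᵃ[ℝ] U | f '' (P ⊗ Q) ⊆ R} onto {g : V →ᵃ[ℝ] (W →ᵃ[ℝ] U) | ∀ x ∈ P, ∀ y ∈ Q, (g x) y ∈ R}; i.e., Hom(P ⊗ Q, R) ≅ Hom(P, Hom(Q,R)). -/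
open scoped TensorProduct

/-!
An affine map on `(V ⊗ W) × V × W` has the form `(t, x, y) ↦ L t + a x + b y + c`, and `L`, being
linear on `V ⊗ W`, is a bilinear map `B`; an affine map `V →ᵃ (W →ᵃ U)` has the form
`x ↦ (y ↦ B x y + a x + b y + c)`. Both spaces are thus linearly equivalent to the space of data
`(c, B, a, b)`, and the composite equivalence `Θ` satisfies `Θ f x y = f (x ⊗ y, x, y)`.

Since `Θ f` is affine in each variable separately and a polytope is the convex hull of its
vertices (Krein–Milman), `Θ f` maps `P × Q` into the convex set `R` as soon as it maps pairs of
vertices into `R`; the same holds for `f` on `P ⊗ Q`, the convex hull of the points `(x ⊗ y, x, y)`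
for vertices `x`, `y`. So `Θ` identifies the two hom-polytopes.
-/

namespace AffineMap

open LinearMap

variable (k V W U : Type*) [CommRing k] [AddCommGroup V] [Module k V] [AddCommGroup W]
  [Module k W] [AddCommGroup U] [Module k U]

noncomputable def tensorProdDataEquiv :
    ((V ⊗[k] W) × V × W →ᵃ[k] U) ≃ₗ[k] U × (V →ₗ[k] W →ₗ[k] U) × (V →ₗ[k] U) × (W →ₗ[k] U) :=
  toConstProdLinearMap k ≪≫ₗ .prodCongr (.refl k U)
    ((coprodEquiv k).symm ≪≫ₗ .prodCongr (TensorProduct.lift.equiv (.id k) V W U).symm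
      (coprodEquiv k).symm)

noncomputable def curriedDataEquiv :
    (V →ᵃ[k] W →ᵃ[k] U) ≃ₗ[k] (U × (W →ₗ[k] U)) × (V →ₗ[k] U) × (V →ₗ[k] W →ₗ[k] U) :=
  toConstProdLinearMap k ≪≫ₗ .prodCongr (toConstProdLinearMap k)
    ((toConstProdLinearMap k).congrRight ≪≫ₗ (prodEquiv k).symm)

noncomputable def tensorCurry : ((V ⊗[k] W) × V × W →ᵃ[k] U) ≃ₗ[k] (V →ᵃ[k] W →ᵃ[k] U) :=
  tensorProdDataEquiv k V W U ≪≫ₗ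
    { toFun p := ((p.1, p.2.2.2), p.2.2.1, p.2.1)
      invFun q := (q.1.1, q.2.2, q.2.1, q.1.2)
      map_add' _ _ := rfl
      map_smul' _ _ := rfl
      left_inv _ := rfl
      right_inv _ := rfl } ≪≫ₗ
    (curriedDataEquiv k V W U).symm

variable {k V W U}

theorem curriedDataEquiv_symm_apply_apply (c : U) (b : W →ₗ[k] U) (a : V →ₗ[k] U)
    (B : V →ₗ[k] W →ₗ[k] U) (x : V) (y : W) :
    (curriedDataEquiv k V W U).symm ((c, b), a, B) x y = B x y + a x + b y + c := by
  simp only [curriedDataEquiv, LinearEquiv.congrRight, LinearEquiv.trans_symm,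
    LinearEquiv.prodCongr_symm, LinearEquiv.symm_symm, LinearEquiv.trans_apply,
    LinearEquiv.prodCongr_apply,
    toConstProdLinearMap_symm_apply, prodEquiv_apply, coe_add, coe_toAffineMap, coe_const,
    Pi.add_apply, LinearEquiv.arrowCongr_symm_apply, LinearEquiv.refl_apply, LinearMap.prod_apply,
    Function.prod_apply, Function.const_apply]
  abel

theorem tensorCurry_apply_apply (f : (V ⊗[k] W) × V × W →ᵃ[k] U) (x : V) (y : W) :
    tensorCurry k V W U f x y = f (x ⊗ₜ y, x, y) := by
  simp only [tensorCurry, tensorProdDataEquiv, LinearEquiv.trans_apply, toConstProdLinearMap_apply,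
    LinearEquiv.prodCongr_apply, LinearEquiv.refl_apply, coprodEquiv_symm_apply,
    LinearEquiv.coe_mk, LinearMap.coe_mk, AddHom.coe_mk, curriedDataEquiv_symm_apply_apply,
    TensorProduct.lift.equiv_symm_apply, LinearMap.coe_comp, coe_inl, Function.comp_apply, coe_inr]
  rw [f.decomp, Pi.add_apply, ← map_add, ← map_add]
  simp

end AffineMap

theorem Convex.apply_apply_mem_of_mem_convexHull {𝕜 V W U : Type*} [CommRing 𝕜] [PartialOrder 𝕜]
    [IsOrderedRing 𝕜] [AddCommGroup V] [Module 𝕜 V] [AddCommGroup W] [Module 𝕜 W]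
    [AddCommGroup U] [Module 𝕜 U] {R : Set U} (hR : Convex 𝕜 R) (g : V →ᵃ[𝕜] W →ᵃ[𝕜] U)
    {s : Set V} {t : Set W} (h : ∀ x ∈ s, ∀ y ∈ t, g x y ∈ R)
    {x : V} (hx : x ∈ convexHull 𝕜 s) {y : W} (hy : y ∈ convexHull 𝕜 t) : g x y ∈ R := by
  have hconvex (y : W) : Convex 𝕜 {x | g x y ∈ R} :=
    (hR.is_linear_preimage (f := fun h : W →ᵃ[𝕜] U ↦ h y) ⟨fun _ _ ↦ rfl, fun _ _ ↦ rfl⟩)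
      |>.affine_preimage g
  have hxR (y : W) (hy : y ∈ t) : g x y ∈ R :=
    convexHull_min (fun x hx ↦ h x hx y hy) (hconvex y) hx
  exact convexHull_min hxR (hR.affine_preimage (g x)) hy

theorem IsPolytope.convex {V : Type*} [AddCommGroup V] [Module ℝ V] {P : Set V}
    (hP : IsPolytope P) : Convex ℝ P := by
  obtain ⟨F, rfl⟩ := hP
  exact convex_convexHull ℝ _

theorem IsPolytope.convexHull_extremePoints_s15 {V : Type*} [AddCommGroup V] [Module ℝ V]
    [FiniteDimensional ℝ V] {P : Set V} (hP : IsPolytope P) :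
    convexHull ℝ (P.extremePoints ℝ) = P := by
  obtain ⟨F, rfl⟩ := hP
  -- `V` carries no topology, so apply Krein–Milman in coordinates.
  let e := (Module.finBasis ℝ V).equivFun
  have himage (s : Set V) : e '' convexHull ℝ s = convexHull ℝ (e '' s) :=
    e.toLinearMap.image_convexHull s
  apply e.injective.image_injective
  rw [himage, image_extremePoints, himage,
    (F.finite_toSet.image e).convexHull_extremePoints_convexHull]

theorem image_tensorPolytope_subset_iff {V W U : Type*} [AddCommGroup V] [Module ℝ V]
    [AddCommGroup W] [Module ℝ W] [AddCommGroup U] [Module ℝ U] {P : Set V} {Q : Set W}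
    {R : Set U} (hP : P ⊆ convexHull ℝ (P.extremePoints ℝ))
    (hQ : Q ⊆ convexHull ℝ (Q.extremePoints ℝ)) (hR : Convex ℝ R)
    (f : (V ⊗[ℝ] W) × V × W →ᵃ[ℝ] U) :
    f '' tensorPolytope P Q ⊆ R ↔ ∀ x ∈ P, ∀ y ∈ Q, f (x ⊗ₜ y, x, y) ∈ R := by
  constructor
  · intro hf x hx y hy
    rw [← AffineMap.tensorCurry_apply_apply]
    refine hR.apply_apply_mem_of_mem_convexHull _ (fun x hx y hy ↦ ?_) (hP hx) (hQ hy)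
    rw [AffineMap.tensorCurry_apply_apply]
    exact hf ⟨_, subset_convexHull ℝ _ ⟨x, hx, y, hy, rfl⟩, rfl⟩
  · intro h
    rw [tensorPolytope, f.image_convexHull]
    refine convexHull_min ?_ hR
    rintro _ ⟨_, ⟨x, hx, y, hy, rfl⟩, rfl⟩
    exact h x (extremePoints_subset hx) y (extremePoints_subset hy)

theorem stmt_15_general {V W U : Type*}
    [AddCommGroup V] [Module ℝ V] [FiniteDimensional ℝ V]
    [AddCommGroup W] [Module ℝ W] [FiniteDimensional ℝ W]
    [AddCommGroup U] [Module ℝ U]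
    (P : Set V) (Q : Set W) (R : Set U)
    (hP : IsPolytope P)
    (hQ : IsPolytope Q)
    (hR : IsPolytope R) :
    ∃ Θ : ((V ⊗[ℝ] W) × V × W →ᵃ[ℝ] U) → (V →ᵃ[ℝ] (W →ᵃ[ℝ] U)),
      (∀ (f : (V ⊗[ℝ] W) × V × W →ᵃ[ℝ] U) (x : V) (y : W),
        (Θ f x) y = f (x ⊗ₜ[ℝ] y, x, y)) ∧
      Set.BijOn Θ
        {f : (V ⊗[ℝ] W) × V × W →ᵃ[ℝ] U | f '' tensorPolytope P Q ⊆ R}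
        {g : V →ᵃ[ℝ] (W →ᵃ[ℝ] U) | ∀ x ∈ P, ∀ y ∈ Q, (g x) y ∈ R} := by
  let Θ := AffineMap.tensorCurry ℝ V W U
  have hpreimage : {f : (V ⊗[ℝ] W) × V × W →ᵃ[ℝ] U | f '' tensorPolytope P Q ⊆ R} =
      Θ ⁻¹' {g | ∀ x ∈ P, ∀ y ∈ Q, g x y ∈ R} := by
    ext f
    simp only [Set.mem_ofPred_eq, Set.mem_preimage, Θ, AffineMap.tensorCurry_apply_apply]
    exact image_tensorPolytope_subset_iff hP.convexHull_extremePoints_s15.symm.subset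
      hQ.convexHull_extremePoints_s15.symm.subset hR.convex f
  refine ⟨Θ, AffineMap.tensorCurry_apply_apply, ?_⟩
  rw [hpreimage]
  exact Θ.bijective.bijOn_preimage

theorem stmt_15 {V W U : Type*}
    [AddCommGroup V] [Module ℝ V] [FiniteDimensional ℝ V]
    [AddCommGroup W] [Module ℝ W] [FiniteDimensional ℝ W]
    [AddCommGroup U] [Module ℝ U] [FiniteDimensional ℝ U]
    (P : Set V) (Q : Set W) (R : Set U)
    (hP : IsPolytope P) (hPne : P.Nonempty) (hPspan : affineSpan ℝ P = ⊤)
    (hQ : IsPolytope Q) (hQne : Q.Nonempty) (hQspan : affineSpan ℝ Q = ⊤)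
    (hR : IsPolytope R) (hRne : R.Nonempty) :
    ∃ Θ : ((V ⊗[ℝ] W) × V × W →ᵃ[ℝ] U) → (V →ᵃ[ℝ] (W →ᵃ[ℝ] U)),
      (∀ (f : (V ⊗[ℝ] W) × V × W →ᵃ[ℝ] U) (x : V) (y : W),
        (Θ f x) y = f (x ⊗ₜ[ℝ] y, x, y)) ∧
      Set.BijOn Θ
        {f : (V ⊗[ℝ] W) × V × W →ᵃ[ℝ] U | f '' tensorPolytope P Q ⊆ R}
        {g : V →ᵃ[ℝ] (W →ᵃ[ℝ] U) | ∀ x ∈ P, ∀ y ∈ Q, (g x) y ∈ R} :=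
  stmt_15_general P Q R hP hQ hR
end

section
/- Let V and W be finite-dimensional real vector spaces, let P ⊆ V be a nonempty polytope with affineSpan ℝ P = ⊤, and let Q ⊆ W be a nonempty polytope. Write H := Hom(P,Q) = {f : V →ᵃ[ℝ] W | f '' P ⊆ Q}. Then there exist an injective affine map ι : W →ᵃ[ℝ] (V →ᵃ[ℝ] W) with ι '' Q ⊆ H, and a map h : H × Set.Icc (0:ℝ) 1 → H such that: (i) h(f,0) = f for all f ∈ H; (ii) h(f,1) ∈ ι '' Q for all f ∈ H; (iii) h(ι x, t) = ι x for all x ∈ Q and t ∈ [0,1]; and h is affine in each variable separately, i.e., for each fixed t ∈ [0,1] the map f ↦ h(f,t) is the restriction to H of an affine self-map of the space of affine maps V →ᵃ[ℝ] W, and for each fixed f ∈ H the map t ↦ h(f,t) is the restriction of an affine map ℝ → (V →ᵃ[ℝ] W). In particular, Q is a strong deformation retract of Hom(P,Q) and the retraction is affine in this sense. -/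
theorem stmt_16 {V W : Type*}
    [AddCommGroup V] [Module ℝ V] [FiniteDimensional ℝ V]
    [AddCommGroup W] [Module ℝ W] [FiniteDimensional ℝ W]
    (P : Set V) (Q : Set W)
    (hP : IsPolytope P) (hPne : P.Nonempty) (hPspan : affineSpan ℝ P = ⊤)
    (hQ : IsPolytope Q) (hQne : Q.Nonempty) :
    ∃ (ι : W →ᵃ[ℝ] (V →ᵃ[ℝ] W))
      (h : (V →ᵃ[ℝ] W) × ℝ → (V →ᵃ[ℝ] W)),
      Function.Injective ι ∧
      ι '' Q ⊆ {f : V →ᵃ[ℝ] W | f '' P ⊆ Q} ∧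
      (∀ f ∈ {f : V →ᵃ[ℝ] W | f '' P ⊆ Q}, ∀ t ∈ Set.Icc (0 : ℝ) 1,
        h (f, t) ∈ {f : V →ᵃ[ℝ] W | f '' P ⊆ Q}) ∧
      -- (i) h(f, 0) = f
      (∀ f ∈ {f : V →ᵃ[ℝ] W | f '' P ⊆ Q}, h (f, 0) = f) ∧
      -- (ii) h(f, 1) ∈ ι '' Q
      (∀ f ∈ {f : V →ᵃ[ℝ] W | f '' P ⊆ Q}, h (f, 1) ∈ ι '' Q) ∧
      -- (iii) h(ι x, t) = ι x
      (∀ x ∈ Q, ∀ t ∈ Set.Icc (0 : ℝ) 1, h (ι x, t) = ι x) ∧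
      -- affine in the first variable
      (∀ t ∈ Set.Icc (0 : ℝ) 1,
        ∃ A : (V →ᵃ[ℝ] W) →ᵃ[ℝ] (V →ᵃ[ℝ] W),
          ∀ f ∈ {f : V →ᵃ[ℝ] W | f '' P ⊆ Q}, h (f, t) = A f) ∧
      -- affine in the second variable
      (∀ f ∈ {f : V →ᵃ[ℝ] W | f '' P ⊆ Q},
        ∃ B : ℝ →ᵃ[ℝ] (V →ᵃ[ℝ] W),
          ∀ t ∈ Set.Icc (0 : ℝ) 1, h (f, t) = B t) := by
  obtain ⟨p₀, hp₀⟩ := hPne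
  obtain ⟨F, hF⟩ := hQ
  have hconv : Convex ℝ Q := hF ▸ convex_convexHull ℝ _
  -- the linear map sending w to the constant affine map with value w
  set constL : W →ₗ[ℝ] (V →ᵃ[ℝ] W) :=
    { toFun := fun w => AffineMap.const ℝ V w
      map_add' := fun a b => by ext v; simp
      map_smul' := fun c a => by ext v; simp }
  set ι : W →ᵃ[ℝ] (V →ᵃ[ℝ] W) := constL.toAffineMap with hι
  -- evaluation at p₀, as a linear map
  set evalL : (V →ᵃ[ℝ] W) →ₗ[ℝ] W :=
    { toFun := fun f => f p₀
      map_add' := fun a b => by simp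
      map_smul' := fun c a => by simp }
  set h : (V →ᵃ[ℝ] W) × ℝ → (V →ᵃ[ℝ] W) :=
    fun ft => AffineMap.lineMap ft.1 (ι (ft.1 p₀)) ft.2 with hh
  have happly : ∀ (f : V →ᵃ[ℝ] W) (t : ℝ) (v : V),
      h (f, t) v = (1 - t) • f v + t • f p₀ := by
    intro f t v
    simp only [hh, AffineMap.lineMap_apply_module]
    simp [hι, constL]
  refine ⟨ι, h, ?_, ?_, ?_, ?_, ?_, ?_, ?_, ?_⟩
  · intro a b hab
    have := congrArg (fun f : V →ᵃ[ℝ] W => f 0) hab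
    simpa [hι, constL] using this
  · rintro f ⟨x, hx, rfl⟩
    rintro y ⟨v, hv, rfl⟩
    simpa [hι, constL] using hx
  · rintro f hf t ⟨ht0, ht1⟩
    rintro y ⟨v, hv, rfl⟩
    rw [happly]
    exact hconv (hf ⟨v, hv, rfl⟩) (hf ⟨p₀, hp₀, rfl⟩)
      (by linarith) ht0 (by ring)
  · intro f hf
    simp [hh]
  · intro f hf
    exact ⟨f p₀, hf ⟨p₀, hp₀, rfl⟩, by simp [hh]⟩
  · intro x hx t ht
    ext v
    rw [happly, sub_smul, one_smul]
    show x - t • x + t • x = x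
    abel
  · intro t ht
    refine ⟨((1 - t) • LinearMap.id + t • (constL ∘ₗ evalL)).toAffineMap, ?_⟩
    intro f hf
    ext v
    rw [happly]
    simp [hι, constL, evalL]
  · intro f hf
    exact ⟨AffineMap.lineMap f (ι (f p₀)), fun t ht => rfl⟩
end

section
/- Let W be a finite-dimensional real vector space, let Q ⊆ W be a nonempty polytope, and let n be a natural number. Let σ ⊆ ℝ^{n+1} be the standard n-simplex, the convex hull of the standard basis vectors e_0, …, e_n, and let σ ⊗ Q ⊆ (ℝ^{n+1} ⊗[ℝ] W) × ℝ^{n+1} × W be the tensor product polytope. Let J := convexHull ℝ {(e_i, Pi.single i w) : i ∈ Fin (n+1), w ∈ extremePoints ℝ Q} ⊆ ℝ^{n+1} × (Fin (n+1) → W), the (n+1)-fold join of copies of Q. Then the affine (indeed linear) map (u, s, w) ↦ (s, ũ), where ũ : Fin (n+1) → W is the image of u under the standard linear equivalence ℝ^{n+1} ⊗[ℝ] W ≃ₗ[ℝ] (Fin (n+1) → W), restricts to a bijection from σ ⊗ Q onto J; i.e., σ ⊗ Q is affinely isomorphic to the (n+1)-fold join of Q with itself. -/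
open scoped TensorProduct

lemma simplex_hull_sub (n : ℕ) :
    convexHull ℝ (Set.range fun i : Fin (n + 1) => Pi.single i (1 : ℝ))
      ⊆ {z : Fin (n + 1) → ℝ | (∀ j, 0 ≤ z j) ∧ ∑ j, z j = 1} := by
  apply convexHull_min
  · rintro _ ⟨i, rfl⟩
    refine ⟨fun j => ?_, ?_⟩
    · by_cases hj : j = i <;> simp [Pi.single_apply, hj]
    · simp
  · intro x hx y hy a b ha hb hab
    refine ⟨fun j => ?_, ?_⟩
    · have := hx.1 j; have := hy.1 j
      simp only [Pi.add_apply, Pi.smul_apply, smul_eq_mul]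
      nlinarith
    · simp only [Pi.add_apply, Pi.smul_apply, smul_eq_mul, Finset.sum_add_distrib,
        ← Finset.mul_sum, hx.2, hy.2]
      linarith

lemma simplex_ep (n : ℕ) :
    Set.extremePoints ℝ (convexHull ℝ (Set.range fun i : Fin (n + 1) => Pi.single i (1 : ℝ)))
      = Set.range fun i : Fin (n + 1) => Pi.single i (1 : ℝ) := by
  apply Set.Subset.antisymm extremePoints_convexHull_subset
  rintro _ ⟨i, rfl⟩
  rw [mem_extremePoints]
  refine ⟨subset_convexHull ℝ _ ⟨i, rfl⟩, fun x hx y hy hseg => ?_⟩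
  obtain ⟨a, b, ha, hb, hab, habeq⟩ := hseg
  have hx' := simplex_hull_sub n hx
  have hy' := simplex_hull_sub n hy
  have key : ∀ z : Fin (n + 1) → ℝ, (∀ j, 0 ≤ z j) → ∑ j, z j = 1 → z i = 1 →
      z = Pi.single i (1 : ℝ) := by
    intro z hz0 hzs hzi
    funext j
    rcases eq_or_ne j i with rfl | hj
    · simp [hzi]
    · have herase : ∑ k ∈ Finset.univ.erase i, z k = 0 := by
        have := Finset.add_sum_erase Finset.univ z (Finset.mem_univ i)
        rw [hzs] at this; linarith
      have hz0' : z j = 0 :=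
        (Finset.sum_eq_zero_iff_of_nonneg (fun k _ => hz0 k)).1 herase j
          (Finset.mem_erase.2 ⟨hj, Finset.mem_univ j⟩)
      simp [Pi.single_apply, hj, hz0']
  have hxle : x i ≤ 1 := by
    calc x i ≤ ∑ j, x j := Finset.single_le_sum (fun k _ => hx'.1 k) (Finset.mem_univ i)
    _ = 1 := hx'.2
  have hyle : y i ≤ 1 := by
    calc y i ≤ ∑ j, y j := Finset.single_le_sum (fun k _ => hy'.1 k) (Finset.mem_univ i)
    _ = 1 := hy'.2
  have heqi : a * x i + b * y i = 1 := by
    have := congrFun habeq i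
    simpa [Pi.single_apply] using this
  have hxi : x i = 1 := by nlinarith
  have hyi : y i = 1 := by nlinarith
  exact ⟨key x hx'.1 hx'.2 hxi, key y hy'.1 hy'.2 hyi⟩

theorem stmt_18 {W : Type*}
    [AddCommGroup W] [Module ℝ W] [FiniteDimensional ℝ W]
    (Q : Set W) (hQ : IsPolytope Q) (hQne : Q.Nonempty) (n : ℕ)
    -- the standard linear equivalence `ℝ^{n+1} ⊗ W ≃ (Fin (n+1) → W)`
    (e : ((Fin (n + 1) → ℝ) ⊗[ℝ] W) ≃ₗ[ℝ] (Fin (n + 1) → W))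
    (he : ∀ (x : Fin (n + 1) → ℝ) (w : W), e (x ⊗ₜ[ℝ] w) = fun i => x i • w) :
    Set.BijOn
      (fun p : ((Fin (n + 1) → ℝ) ⊗[ℝ] W) × (Fin (n + 1) → ℝ) × W => (p.2.1, e p.1))
      (tensorPolytope (convexHull ℝ (Set.range fun i : Fin (n + 1) => Pi.single i (1 : ℝ))) Q)
      (convexHull ℝ
        {p : (Fin (n + 1) → ℝ) × (Fin (n + 1) → W) |
          ∃ (i : Fin (n + 1)), ∃ w ∈ Set.extremePoints ℝ Q,
            p = (Pi.single i (1 : ℝ), Pi.single i w)}) := by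
  set f : (((Fin (n + 1) → ℝ) ⊗[ℝ] W) × (Fin (n + 1) → ℝ) × W) →ₗ[ℝ]
      ((Fin (n + 1) → ℝ) × (Fin (n + 1) → W)) :=
    LinearMap.prod ((LinearMap.fst ℝ _ _).comp (LinearMap.snd ℝ _ _))
      (e.toLinearMap.comp (LinearMap.fst ℝ _ _)) with hf
  have hfapply : ∀ p : ((Fin (n + 1) → ℝ) ⊗[ℝ] W) × (Fin (n + 1) → ℝ) × W,
      f p = (p.2.1, e p.1) := fun p => rfl
  have hsingle : ∀ (i : Fin (n + 1)) (w : W),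
      (fun j => (Pi.single i (1 : ℝ) : Fin (n + 1) → ℝ) j • w)
        = (Pi.single i w : Fin (n + 1) → W) := by
    intro i w
    funext j
    by_cases hj : j = i <;> simp [Pi.single_apply, hj]
  -- the vertex sets correspond
  have himgset :
      f '' {p | ∃ x ∈ Set.extremePoints ℝ
            (convexHull ℝ (Set.range fun i : Fin (n + 1) => Pi.single i (1 : ℝ))),
          ∃ y ∈ Set.extremePoints ℝ Q, p = (x ⊗ₜ[ℝ] y, x, y)}
        = {p : (Fin (n + 1) → ℝ) × (Fin (n + 1) → W) |
            ∃ (i : Fin (n + 1)), ∃ w ∈ Set.extremePoints ℝ Q,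
              p = (Pi.single i (1 : ℝ), Pi.single i w)} := by
    rw [simplex_ep n]
    ext p
    constructor
    · rintro ⟨q, ⟨x, ⟨i, rfl⟩, y, hy, rfl⟩, rfl⟩
      refine ⟨i, y, hy, ?_⟩
      rw [hfapply]
      rw [he, hsingle]
    · rintro ⟨i, w, hw, rfl⟩
      refine ⟨(Pi.single i (1 : ℝ) ⊗ₜ[ℝ] w, Pi.single i (1 : ℝ), w),
        ⟨Pi.single i (1 : ℝ), ⟨i, rfl⟩, w, hw, rfl⟩, ?_⟩
      rw [hfapply]
      rw [he, hsingle]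
  have himg : (fun p : ((Fin (n + 1) → ℝ) ⊗[ℝ] W) × (Fin (n + 1) → ℝ) × W => (p.2.1, e p.1)) ''
        (tensorPolytope (convexHull ℝ (Set.range fun i : Fin (n + 1) => Pi.single i (1 : ℝ))) Q)
      = convexHull ℝ
        {p : (Fin (n + 1) → ℝ) × (Fin (n + 1) → W) |
          ∃ (i : Fin (n + 1)), ∃ w ∈ Set.extremePoints ℝ Q,
            p = (Pi.single i (1 : ℝ), Pi.single i w)} := by
    have : (fun p : ((Fin (n + 1) → ℝ) ⊗[ℝ] W) × (Fin (n + 1) → ℝ) × W => (p.2.1, e p.1)) = f :=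
      funext fun p => (hfapply p).symm
    rw [this, tensorPolytope, f.image_convexHull, himgset]
  -- on the polytope, the third coordinate is determined
  have hC : tensorPolytope (convexHull ℝ (Set.range fun i : Fin (n + 1) => Pi.single i (1 : ℝ))) Q
      ⊆ {p : ((Fin (n + 1) → ℝ) ⊗[ℝ] W) × (Fin (n + 1) → ℝ) × W |
          p.2.2 = ∑ j, e p.1 j} := by
    apply convexHull_min
    · rintro _ ⟨x, hx, y, hy, rfl⟩
      rw [simplex_ep n] at hx
      obtain ⟨i, rfl⟩ := hx
      simp only [Set.mem_setOf_eq, he, hsingle]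
      simp [Finset.sum_pi_single']
    · intro p hp q hq a b ha hb hab
      simp only [Set.mem_setOf_eq] at hp hq ⊢
      simp only [Prod.snd_add, Prod.smul_snd, Prod.fst_add, Prod.smul_fst, map_add,
        map_smul, Pi.add_apply, Pi.smul_apply, Finset.sum_add_distrib, ← Finset.smul_sum,
        hp, hq]
  refine ⟨fun p hp => himg ▸ Set.mem_image_of_mem _ hp, ?_, fun q hq => himg ▸ hq⟩
  intro p hp q hq hpq
  simp only [Prod.mk.injEq] at hpq
  have h1 : p.1 = q.1 := e.injective hpq.2
  have h21 : p.2.1 = q.2.1 := hpq.1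
  have h22 : p.2.2 = q.2.2 := by
    rw [hC hp, hC hq, h1]
  exact Prod.ext h1 (Prod.ext h21 h22)
end
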